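/- arXiv:nlin/0611021 — 3 statements merged into one kernel-verified Lean document; each statement's English description precedes it below -/
import Mathlib

section
/- Let α ∈ (0.5, 0.8469), k̂ = (0,−1), and let ε_*(α) be the critical viscosity below which the line-k̂ spectral problem has a unique positive eigenvalue λ(ε). Then for every ε ∈ (0, ε_*(α)): √(α²(1−α²)/(2(α²+1)) − α⁴(α²+3)/(4(α²+1)(α²+4))) − ε(α²+1) < λ(ε) < √(α²(1−α²)/(2(α²+1))) − εα² (the quantity under the left square root being positive for α ∈ (0.5,0.8469)); moreover ε ↦ ε⁻¹λ(ε) is strictly monotonically decreasing on (0, ε_*(α)). In particular λ(ε) = O(1) as ε → 0⁺. -/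
/-- The interaction coefficient
`A(q,r) = (α/2)·[1/(r₁²+(αr₂)²) − 1/(q₁²+(αq₂)²)]·(q₁r₂ − q₂r₁)`. -/
noncomputable def coefA (α : ℝ) (q r : ℤ × ℤ) : ℝ :=
  (α / 2) * (1 / ((r.1 : ℝ) ^ 2 + (α * (r.2 : ℝ)) ^ 2)
      - 1 / ((q.1 : ℝ) ^ 2 + (α * (q.2 : ℝ)) ^ 2)) *
    ((q.1 : ℝ) * (r.2 : ℝ) - (q.2 : ℝ) * (r.1 : ℝ))

/-- The line-`k̂` spectral problem for the linearized 2D Navier–Stokes operator at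
the shear `Ω = 2 cos x₁`. -/
def LineEqn (α ε : ℝ) (k : ℤ × ℤ) (lam : ℂ) (ω : ℤ → ℂ) : Prop :=
  ∀ n : ℤ,
    (↑(coefA α (1, 0) (k.1 + (n - 1), k.2)) : ℂ) * ω (n - 1)
      - (↑(ε * (((k.1 : ℝ) + (n : ℝ)) ^ 2 + (α * (k.2 : ℝ)) ^ 2)) : ℂ) * ω n
      - (↑(coefA α (1, 0) (k.1 + (n + 1), k.2)) : ℂ) * ω (n + 1)
    = lam * ω n

/-- `lam` is an eigenvalue of the line-`k̂` problem: there is a nonzero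
square-summable solution. -/
def IsLineEig (α ε : ℝ) (k : ℤ × ℤ) (lam : ℂ) : Prop :=
  ∃ ω : ℤ → ℂ, Memℓp ω 2 ∧ ω ≠ 0 ∧ LineEqn α ε k lam ω

namespace NSproof

noncomputable def cc (α : ℝ) (n : ℤ) : ℝ := (n:ℝ)^2 + α^2

noncomputable def aa (α : ℝ) (n : ℤ) : ℝ := α / 2 * (1 - 1 / cc α n)

section Basic
variable {α : ℝ}

lemma cc_pos (hα0 : 0 < α) (n : ℤ) : 0 < cc α n := by
  unfold cc; nlinarith [sq_nonneg ((n:ℝ)), pow_pos hα0 2]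

lemma cc_even (n : ℤ) : cc α (-n) = cc α n := by unfold cc; push_cast; ring

lemma aa_even (n : ℤ) : aa α (-n) = aa α n := by unfold aa; rw [cc_even]

lemma cc_ge_sq (hα0 : 0 < α) (n : ℤ) : (n:ℝ)^2 ≤ cc α n := by
  unfold cc; nlinarith [pow_pos hα0 2]

lemma aa_lt (hα0 : 0 < α) (n : ℤ) : aa α n < α/2 := by
  have h := cc_pos hα0 (α := α) n
  have h2 : 0 < 1 / cc α n := by positivity
  unfold aa; nlinarith

lemma one_le_sq_cast {n : ℤ} (hn : n ≠ 0) : (1:ℝ) ≤ (n:ℝ)^2 := by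
  have : (1:ℤ) ≤ n^2 := by
    rcases lt_or_gt_of_ne hn with h | h
    · nlinarith
    · nlinarith
  exact_mod_cast this

lemma aa_pos (hα0 : 0 < α) {n : ℤ} (hn : n ≠ 0) : 0 < aa α n := by
  have h1 : (1:ℝ) ≤ (n:ℝ)^2 := one_le_sq_cast hn
  have h : 0 < cc α n := cc_pos hα0 n
  have h3 : 1 < cc α n := by unfold cc; nlinarith [pow_pos hα0 2]
  have h4 : 1 / cc α n < 1 := by
    rw [div_lt_one h]; exact h3
  have h5 : 0 < 1 / cc α n := by positivity
  unfold aa; nlinarith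

lemma aa_neg0 (hα0 : 0 < α) (hα1 : α < 1) : aa α 0 < 0 := by
  have h : cc α 0 = α^2 := by unfold cc; norm_num
  have h2 : 0 < α^2 := by positivity
  have h3 : cc α 0 < 1 := by rw [h]; nlinarith
  have h0 : 0 < cc α 0 := cc_pos hα0 0
  have h4 : 1 < 1 / cc α 0 := by
    rw [lt_div_iff₀ h0]; linarith
  unfold aa; nlinarith

lemma aa_ne (hα0 : 0 < α) (hα1 : α < 1) (n : ℤ) : aa α n ≠ 0 := by
  rcases eq_or_ne n 0 with rfl | h
  · exact ne_of_lt (aa_neg0 hα0 hα1)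
  · exact ne_of_gt (aa_pos hα0 h)

end Basic

/-- The real recurrence. -/
def Rec (α ε lam : ℝ) (x : ℤ → ℝ) : Prop :=
  ∀ n : ℤ, aa α (n-1) * x (n-1) - (lam + ε * cc α n) * x n - aa α (n+1) * x (n+1) = 0

lemma coefA_eq (α : ℝ) (m : ℤ) : coefA α (1, 0) (m, -1) = aa α m := by
  unfold coefA aa cc
  push_cast
  norm_num
  ring

section Convert
variable {α ε l : ℝ} {ω : ℤ → ℂ} {x : ℤ → ℝ}

lemma lineEqn_to_rec (hE : LineEqn α ε (0, -1) ((l:ℝ) : ℂ) ω) :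
    Rec α ε l (fun n => (ω n).re) ∧ Rec α ε l (fun n => (ω n).im) := by
  have key : ∀ n : ℤ, (aa α (n-1) : ℂ) * ω (n-1) - ((l + ε * cc α n : ℝ) : ℂ) * ω n
      - (aa α (n+1) : ℂ) * ω (n+1) = 0 := by
    intro n
    have h := hE n
    simp only [show ((0:ℤ),(-1:ℤ)).1 = 0 from rfl, show ((0:ℤ),(-1:ℤ)).2 = -1 from rfl,
      zero_add] at h
    rw [coefA_eq, coefA_eq] at h
    have hm : ε * (((((0:ℤ)):ℝ) + (n : ℝ)) ^ 2 + (α * (((-1:ℤ)):ℝ)) ^ 2) = ε * cc α n := by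
      unfold cc; push_cast; ring
    rw [hm] at h
    push_cast at h ⊢
    linear_combination h
  constructor <;> intro n <;>
  · have h1 := congrArg Complex.re (key n)
    have h2 := congrArg Complex.im (key n)
    simp only [Complex.sub_re, Complex.mul_re, Complex.ofReal_re, Complex.ofReal_im,
      Complex.zero_re, Complex.sub_im, Complex.mul_im, Complex.zero_im, zero_mul, mul_zero,
      sub_zero, zero_add] at h1 h2
    simp only []
    linarith

lemma rec_to_lineEqn (hx : Rec α ε l x) :
    LineEqn α ε (0, -1) ((l:ℝ) : ℂ) (fun n => ((x n : ℝ) : ℂ)) := by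
  intro n
  have h := hx n
  simp only [show ((0:ℤ),(-1:ℤ)).1 = 0 from rfl, show ((0:ℤ),(-1:ℤ)).2 = -1 from rfl, zero_add]
  rw [coefA_eq, coefA_eq]
  have hm : ε * (((((0:ℤ)):ℝ) + (n : ℝ)) ^ 2 + (α * (((-1:ℤ)):ℝ)) ^ 2) = ε * cc α n := by
    unfold cc; push_cast; ring
  rw [hm]
  have h2 : aa α (n-1) * x (n-1) - (ε * cc α n) * x n - aa α (n+1) * x (n+1) = l * x n := by
    unfold Rec at hx; linarith [hx n]
  have hc := congrArg (fun r : ℝ => (r : ℂ)) h2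
  push_cast at hc ⊢
  linear_combination hc

lemma decay_of_memlp (hω : Memℓp ω 2) (x : ℤ → ℝ) (hle : ∀ n, |x n| ≤ ‖ω n‖) :
    Filter.Tendsto x Filter.atTop (nhds 0) ∧ Filter.Tendsto x Filter.atBot (nhds 0) := by
  have hp : (0:ℝ) < (2:ENNReal).toReal := by norm_num
  have hS : Summable fun n : ℤ => ‖ω n‖ ^ (2:ENNReal).toReal := (memℓp_gen_iff hp).mp hω
  have hS2 : Summable fun n : ℤ => ‖ω n‖ ^ (2:ℕ) := by
    have : (2:ENNReal).toReal = ((2:ℕ):ℝ) := by norm_num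
    rw [this] at hS
    simpa [Real.rpow_natCast] using hS
  have ht : Filter.Tendsto (fun n : ℤ => ‖ω n‖ ^ (2:ℕ)) Filter.cofinite (nhds 0) :=
    hS2.tendsto_cofinite_zero
  have hsq : Filter.Tendsto (fun n : ℤ => ‖ω n‖) Filter.cofinite (nhds 0) := by
    have hc := (Real.continuous_sqrt.tendsto 0).comp ht
    simp only [Real.sqrt_zero] at hc
    convert hc using 1
    funext n
    simp [Function.comp, Real.sqrt_sq (norm_nonneg (ω n))]
  have hx : Filter.Tendsto x Filter.cofinite (nhds 0) := by
    apply squeeze_zero_norm _ hsq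
    intro n
    simpa [Real.norm_eq_abs] using hle n
  have hco : Filter.cofinite (α := ℤ) = Filter.atBot ⊔ Filter.atTop := Int.cofinite_eq
  constructor
  · exact hx.mono_left (by rw [hco]; exact le_sup_right)
  · exact hx.mono_left (by rw [hco]; exact le_sup_left)

end Convert

section Signs
variable {α ε l : ℝ} {x : ℤ → ℝ}

lemma rec_neg (hx : Rec α ε l x) : Rec α ε l (fun n => - x n) := by
  intro n; have h := hx n; simp only []; linarith

lemma rec_sub {y : ℤ → ℝ} (hx : Rec α ε l x) (hy : Rec α ε l y) :
    Rec α ε l (fun n => x n - y n) := by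
  intro n; have h := hx n; have h' := hy n; simp only []; ring_nf; ring_nf at h h'; linarith

lemma rec_eta (hx : Rec α ε l x) : Rec α ε l (fun n => (-1:ℝ)^n * x (-n)) := by
  intro n
  have h := hx (-n)
  have e1 : (-n : ℤ) - 1 = -(n+1) := by ring
  have e2 : (-n : ℤ) + 1 = -(n-1) := by ring
  rw [e1, e2, show (-(n+1) : ℤ) = -(n+1) from rfl] at h
  rw [aa_even, aa_even, cc_even] at h
  -- h : aa α (n+1) * x (-(n+1)) - (l + ε * cc α n) * x (-n) - aa α (n-1) * x (-(n-1)) = 0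
  have p1 : (-1:ℝ)^(n-1) = -(-1:ℝ)^n := by
    rw [zpow_sub_one₀ (by norm_num : (-1:ℝ) ≠ 0)]
    norm_num
  have p2 : (-1:ℝ)^(n+1) = -(-1:ℝ)^n := by
    rw [zpow_add_one₀ (by norm_num : (-1:ℝ) ≠ 0)]
    norm_num
  simp only []
  rw [p1, p2]
  linear_combination ((-1:ℝ)^n) * h
end Signs


section Flip
variable {α ε l : ℝ} {x : ℤ → ℝ}

lemma bpos (hα0 : 0 < α) (hl : 0 < l) (hε : 0 < ε) (n : ℤ) : 0 < l + ε * cc α n := by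
  have := cc_pos hα0 (α := α) n; nlinarith

set_option maxHeartbeats 1000000 in
lemma no_flip (hα0 : 0 < α) (hα1 : α < 1) (hl : 0 < l) (hε : 0 < ε)
    (hx : Rec α ε l x) (hd : Filter.Tendsto x Filter.atTop (nhds 0))
    {m : ℤ} (hm : 1 ≤ m) (h1 : 0 < x m) (h2 : x (m+1) ≤ 0) : False := by
  set u : ℕ → ℝ := fun j => (-1:ℝ)^j * x (m + (j:ℤ)) with hu
  have hb : ∀ n : ℤ, 0 < l + ε * cc α n := bpos hα0 hl hε
  have hrec : ∀ j : ℕ, aa α (m+(j:ℤ)+2) * u (j+2)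
      = aa α (m+(j:ℤ)) * u j + (l + ε * cc α (m+(j:ℤ)+1)) * u (j+1) := by
    intro j
    have h := hx (m + (j:ℤ) + 1)
    have e1 : m + (j:ℤ) + 1 - 1 = m + (j:ℤ) := by ring
    have e2 : m + (j:ℤ) + 1 + 1 = m + (j:ℤ) + 2 := by ring
    rw [e1, e2] at h
    have g1 : (m + ((j:ℕ)+2:ℕ) : ℤ) = m + (j:ℤ) + 2 := by push_cast; ring
    have g2 : (m + ((j:ℕ)+1:ℕ) : ℤ) = m + (j:ℤ) + 1 := by push_cast; ring
    simp only [hu, g1, g2]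
    linear_combination (-(-1:ℝ)^j) * h
  have hu0 : 0 < u 0 := by simp [hu, h1]
  have hu1 : 0 ≤ u 1 := by
    have h3 : u 1 = - x (m+1) := by simp [hu]
    rw [h3]; linarith
  have hap0 : 0 < aa α m := aa_pos hα0 (by omega)
  have hap1 : 0 < aa α (m+1) := aa_pos hα0 (by omega)
  have hap2 : 0 < aa α (m+2) := aa_pos hα0 (by omega)
  have hap3 : 0 < aa α (m+3) := aa_pos hα0 (by omega)
  have h20 := hrec 0
  norm_num at h20
  -- h20 : aa α (m+2) * u 2 = aa α m * u 0 + (l + ε * cc α (m+1)) * u 1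
  have hu2 : 0 < u 2 := by nlinarith [hb (m+1)]
  have hq2 : aa α m * u 0 ≤ aa α (m+2) * u 2 := by nlinarith [hb (m+1)]
  have h31 := hrec 1
  norm_num at h31
  have e31 : m + 1 + 2 = m + 3 := by ring
  rw [e31] at h31
  -- h31 : aa α (m+3) * u 3 = aa α (m+1) * u 1 + (l + ε * cc α (m+1+1)) * u 2
  have hu3 : 0 < u 3 := by nlinarith [hb (m+1+1)]
  set δ : ℝ := min (aa α (m+2) * u 2) (aa α (m+3) * u 3) with hδdef
  have hδ : 0 < δ := lt_min (mul_pos hap2 hu2) (mul_pos hap3 hu3)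
  have main : ∀ j : ℕ, 2 ≤ j →
      (0 < u j ∧ δ ≤ aa α (m+(j:ℤ)) * u j)
        ∧ (0 < u (j+1) ∧ δ ≤ aa α (m+((j+1:ℕ):ℤ)) * u (j+1)) := by
    intro j hj
    induction j, hj using Nat.le_induction with
    | base =>
      have e2 : (m+((2:ℕ):ℤ)) = m + 2 := by norm_num
      have e3 : (m+((2+1:ℕ):ℤ)) = m + 3 := by push_cast; ring
      rw [e2, e3]
      exact ⟨⟨hu2, min_le_left _ _⟩, hu3, min_le_right _ _⟩
    | succ k hk ih =>
      refine ⟨ih.2, ?_, ?_⟩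
      · have h := hrec k
        have hbk := hb (m+(k:ℤ)+1)
        have hak : 0 < aa α (m+(k:ℤ)) := aa_pos hα0 (by omega)
        have hap : 0 < aa α (m+(k:ℤ)+2) := aa_pos hα0 (by omega)
        have eu : u (k+1+1) = u (k+2) := by norm_num
        rw [eu]
        nlinarith [ih.1.1, ih.2.1, ih.1.2]
      · have h := hrec k
        have hbk := hb (m+(k:ℤ)+1)
        have e : (m+((k+1+1:ℕ):ℤ)) = m + (k:ℤ) + 2 := by push_cast; ring
        rw [e]
        have eu : u (k+1+1) = u (k+2) := by norm_num
        rw [eu]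
        nlinarith [ih.2.1, ih.1.2]
  have hub : ∀ j : ℕ, 2 ≤ j → 2*δ/α ≤ u j := by
    intro j hj
    have h := (main j hj).1
    have hlt : aa α (m+(j:ℤ)) < α/2 := aa_lt hα0 _
    have h3 : δ ≤ (α/2) * u j := le_trans h.2 (by nlinarith [h.1])
    rw [div_le_iff₀ hα0]
    nlinarith
  have hδ2 : 0 < 2*δ/α := by positivity
  have hev := (Metric.tendsto_nhds.mp hd) (2*δ/α) hδ2
  rw [Filter.eventually_atTop] at hev
  obtain ⟨N, hN⟩ := hev
  set n : ℤ := max N (m + 2) with hn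
  have h5 := hN n (le_max_left _ _)
  have hmn : m + 2 ≤ n := le_max_right _ _
  set j : ℕ := (n - m).toNat with hj
  have hj2 : 2 ≤ j := by omega
  have hnj : m + (j:ℤ) = n := by
    have h0 : (0:ℤ) ≤ n - m := by omega
    simp [hj, Int.toNat_of_nonneg h0]
  have h6 := hub j hj2
  have h7 : |x n| < 2*δ/α := by
    rw [Real.dist_eq, sub_zero] at h5; exact h5
  have h8 : u j = (-1:ℝ)^j * x n := by rw [hu]; simp [hnj]
  have h9 : |u j| = |x n| := by rw [h8, abs_mul, abs_pow, abs_neg, abs_one, one_pow, one_mul]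
  have h10 : u j ≤ |u j| := le_abs_self _
  linarith

lemma no_flip' (hα0 : 0 < α) (hα1 : α < 1) (hl : 0 < l) (hε : 0 < ε)
    (hx : Rec α ε l x) (hd : Filter.Tendsto x Filter.atTop (nhds 0))
    {m : ℤ} (hm : 1 ≤ m) (h1 : x m < 0) (h2 : 0 ≤ x (m+1)) : False := by
  have hx' : Rec α ε l (fun n => - x n) := rec_neg hx
  have hd' : Filter.Tendsto (fun n => - x n) Filter.atTop (nhds 0) := by
    simpa using hd.neg
  exact no_flip hα0 hα1 hl hε hx' hd' hm (by simpa using h1) (by simpa using h2)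

lemma all_zero (hα0 : 0 < α) (hα1 : α < 1) (hx : Rec α ε l x)
    {m : ℤ} (h0 : x m = 0) (h1 : x (m+1) = 0) : ∀ n, x n = 0 := by
  have hane := aa_ne hα0 hα1 (α := α)
  have fwd : ∀ j : ℕ, x (m+(j:ℤ)) = 0 ∧ x (m+(j:ℤ)+1) = 0 := by
    intro j
    induction j with
    | zero => norm_num; exact ⟨h0, h1⟩
    | succ k ih =>
      have h := hx (m+(k:ℤ)+1)
      have e1 : m + (k:ℤ) + 1 - 1 = m + (k:ℤ) := by ring
      rw [e1, ih.1, ih.2] at h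
      have h2 : x (m+(k:ℤ)+1+1) = 0 := by
        have := hane (m+(k:ℤ)+1+1)
        have h3 : aa α (m+(k:ℤ)+1+1) * x (m+(k:ℤ)+1+1) = 0 := by linarith
        exact (mul_eq_zero.mp h3).resolve_left this
      have e2 : (m+((k+1:ℕ):ℤ)) = m + (k:ℤ) + 1 := by push_cast; ring
      rw [e2]
      have e3 : m + (k:ℤ) + 1 + 1 = m + (k:ℤ) + 1 + 1 := rfl
      exact ⟨ih.2, h2⟩
  have bwd : ∀ j : ℕ, x (m-(j:ℤ)) = 0 ∧ x (m-(j:ℤ)+1) = 0 := by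
    intro j
    induction j with
    | zero => norm_num; exact ⟨h0, h1⟩
    | succ k ih =>
      have h := hx (m-(k:ℤ))
      rw [ih.1, ih.2] at h
      have h2 : x (m-(k:ℤ)-1) = 0 := by
        have := hane (m-(k:ℤ)-1)
        have h3 : aa α (m-(k:ℤ)-1) * x (m-(k:ℤ)-1) = 0 := by linarith
        exact (mul_eq_zero.mp h3).resolve_left this
      have e2 : (m-((k+1:ℕ):ℤ)) = m - (k:ℤ) - 1 := by push_cast; ring
      have e3 : (m-((k+1:ℕ):ℤ)+1) = m - (k:ℤ) := by push_cast; ring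
      rw [e3, e2]
      exact ⟨h2, ih.1⟩
  intro n
  rcases le_or_gt m n with h | h
  · have h0' : (0:ℤ) ≤ n - m := by omega
    have := (fwd (n-m).toNat).1
    rwa [show m + ((n-m).toNat:ℤ) = n by rw [Int.toNat_of_nonneg h0']; ring] at this
  · have h0' : (0:ℤ) ≤ m - n := by omega
    have := (bwd (m-n).toNat).1
    rwa [show m - ((m-n).toNat:ℤ) = n by rw [Int.toNat_of_nonneg h0']; ring] at this

lemma tail_pos (hα0 : 0 < α) (hα1 : α < 1) (hl : 0 < l) (hε : 0 < ε)
    (hx : Rec α ε l x) (hd : Filter.Tendsto x Filter.atTop (nhds 0))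
    (h1 : 0 < x 1) : ∀ n : ℤ, 1 ≤ n → 0 < x n := by
  refine Int.le_induction h1 (fun k hk ih => ?_)
  by_contra hc
  push_neg at hc
  exact no_flip hα0 hα1 hl hε hx hd hk ih hc

lemma tail_neg (hα0 : 0 < α) (hα1 : α < 1) (hl : 0 < l) (hε : 0 < ε)
    (hx : Rec α ε l x) (hd : Filter.Tendsto x Filter.atTop (nhds 0))
    (h1 : x 1 < 0) : ∀ n : ℤ, 1 ≤ n → x n < 0 := by
  have hx' : Rec α ε l (fun n => - x n) := rec_neg hx
  have hd' : Filter.Tendsto (fun n => - x n) Filter.atTop (nhds 0) := by simpa using hd.neg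
  intro n hn
  have := tail_pos hα0 hα1 hl hε hx' hd' (by simpa using h1) n hn
  simpa using this

lemma tail_zero (hα0 : 0 < α) (hα1 : α < 1) (hl : 0 < l) (hε : 0 < ε)
    (hx : Rec α ε l x) (hd : Filter.Tendsto x Filter.atTop (nhds 0))
    (h1 : x 1 = 0) : x 2 = 0 := by
  by_contra h2
  have h := hx 2
  norm_num [h1] at h
  -- h : -(l + ε * cc α 2) * x 2 - aa α 3 * x 3 = 0 (shape may vary)
  have ha3 : 0 < aa α 3 := aa_pos hα0 (by omega)
  have hb2 := bpos hα0 hl hε (α := α) 2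
  rcases lt_or_gt_of_ne h2 with hneg | hpos
  · have h3 : 0 < x 3 := by nlinarith
    exact no_flip' hα0 hα1 hl hε hx hd (by norm_num) hneg (by norm_num; linarith)
  · have h3 : x 3 < 0 := by nlinarith
    exact no_flip hα0 hα1 hl hε hx hd (by norm_num) hpos (by norm_num; linarith)

end Flip
section Key
variable {α ε l : ℝ}

lemma negone_zpow_sq (n : ℤ) : (-1:ℝ)^n * (-1:ℝ)^n = 1 := by
  rw [← zpow_add₀ (by norm_num : (-1:ℝ) ≠ 0)]
  have : n + n = 2 * n := by ring
  rw [this, zpow_mul]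
  norm_num

lemma abs_negone_zpow (n : ℤ) : |(-1:ℝ)^n| = 1 := by
  have h2 : |(-1:ℝ)^n|^2 - 1 = 0 := by
    rw [sq_abs, pow_two]
    linarith [negone_zpow_sq n]
  have h3 : (|(-1:ℝ)^n| - 1) * (|(-1:ℝ)^n| + 1) = 0 := by linear_combination h2
  rcases mul_eq_zero.mp h3 with h | h
  · linarith
  · have := abs_nonneg ((-1:ℝ)^n); linarith

set_option maxHeartbeats 1000000 in
lemma key_pos (hα0 : 0 < α) (hα1 : α < 1) (hl : 0 < l) (hε : 0 < ε) {x : ℤ → ℝ}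
    (hx : Rec α ε l x) (hsym : ∀ n : ℤ, x (-n) = (-1:ℝ)^n * x n)
    (hpos : ∀ n : ℤ, 1 ≤ n → 0 < x n) :
    ∃ t : ℤ → ℝ, (∀ n : ℤ, 2 ≤ n → 0 < t n) ∧
      (∀ n : ℤ, 2 ≤ n → t n * ((l + ε * cc α n) + t (n+1)) = aa α (n-1) * aa α n) ∧
      (l + ε * cc α 0) * ((l + ε * cc α 1) + t 2) = -2 * (aa α 0 * aa α 1) := by
  have hb := bpos hα0 hl hε (α := α)
  have hx1 := hpos 1 le_rfl
  have ha1 : (0:ℝ) < aa α 1 := aa_pos hα0 (by omega)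
  have h0 := hx 0
  norm_num at h0
  have hm1 : x (-1 : ℤ) = - x 1 := by
    have h := hsym 1
    rw [h, zpow_one]; ring
  rw [show ((-1):ℤ) = -(1:ℤ) from rfl] at h0
  rw [aa_even] at h0
  rw [hm1] at h0
  -- h0 : aa α 1 * (- x 1) - (l + ε * cc α 0) * x 0 - aa α 1 * x 1 = 0 (modulo shape)
  have hx0 : (l + ε * cc α 0) * x 0 = -2 * aa α 1 * x 1 := by linarith
  refine ⟨fun n => aa α n * x n / x (n-1), ?_, ?_, ?_⟩
  all_goals have hteq : ∀ k : ℤ, (fun n => aa α n * x n / x (n-1)) k = aa α k * x k / x (k-1) :=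
    fun k => rfl
  · intro n hn
    have h1 : 0 < x (n-1) := hpos (n-1) (by omega)
    have h2 : 0 < x n := hpos n (by omega)
    have h3 : 0 < aa α n := aa_pos hα0 (by omega)
    positivity
  · intro n hn
    have h1 : 0 < x (n-1) := hpos (n-1) (by omega)
    have h2 : 0 < x n := hpos n (by omega)
    have h := hx n
    rw [hteq n, hteq (n+1), show n+1-1 = n from by ring]
    field_simp
    linear_combination (-(aa α n)) * h
  · rw [hteq 2, show (2:ℤ)-1 = 1 from by ring]
    have h1 := hx 1
    norm_num at h1
    -- h1 : aa α 0 * x 0 - (l + ε * cc α 1) * x 1 - aa α 2 * x 2 = 0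
    field_simp
    linear_combination (aa α 0) * hx0 - (l + ε*cc α 0) * h1

lemma key_real (hα0 : 0 < α) (hα1 : α < 1) (hl : 0 < l) (hε : 0 < ε) {x : ℤ → ℝ}
    (hx : Rec α ε l x)
    (hdT : Filter.Tendsto x Filter.atTop (nhds 0))
    (hdB : Filter.Tendsto x Filter.atBot (nhds 0))
    (hnz : ∃ n, x n ≠ 0) :
    ∃ t : ℤ → ℝ, (∀ n : ℤ, 2 ≤ n → 0 < t n) ∧
      (∀ n : ℤ, 2 ≤ n → t n * ((l + ε * cc α n) + t (n+1)) = aa α (n-1) * aa α n) ∧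
      (l + ε * cc α 0) * ((l + ε * cc α 1) + t 2) = -2 * (aa α 0 * aa α 1) := by
  have hb := bpos hα0 hl hε (α := α)
  set y : ℤ → ℝ := fun n => (-1:ℝ)^n * x (-n) with hy
  have hyR : Rec α ε l y := rec_eta hx
  have hneg : Filter.Tendsto (fun n : ℤ => x (-n)) Filter.atTop (nhds 0) :=
    hdB.comp Filter.tendsto_neg_atTop_atBot
  have habs : Filter.Tendsto (fun n : ℤ => |x (-n)|) Filter.atTop (nhds 0) := by
    have := (continuous_abs.tendsto (0:ℝ)).comp hneg
    rwa [abs_zero] at this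
  have hyT : Filter.Tendsto y Filter.atTop (nhds 0) := by
    apply squeeze_zero_norm _ habs
    intro n
    rw [hy]
    simp only [Real.norm_eq_abs, abs_mul]
    rw [abs_negone_zpow, one_mul]
  set z : ℤ → ℝ := fun n => x n - y n with hz
  have hzR : Rec α ε l z := rec_sub hx hyR
  have hzT : Filter.Tendsto z Filter.atTop (nhds 0) := by
    have := hdT.sub hyT
    simpa using this
  have hz0 : z 0 = 0 := by simp [hz, hy]
  have hzero : ∀ n, z n = 0 := by
    by_cases hz1 : z 1 = 0
    · exact all_zero hα0 hα1 hzR hz0 (by simpa using hz1)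
    · exfalso
      have h1 := hzR 1
      norm_num [hz0] at h1
      -- h1 relates z 1 and z 2 : aa α 0 * z 0 gone
      have ha2 : (0:ℝ) < aa α 2 := aa_pos hα0 (by omega)
      rcases lt_or_gt_of_ne hz1 with hn | hp
      · have h2 : z 2 < 0 := tail_neg hα0 hα1 hl hε hzR hzT hn 2 (by omega)
        nlinarith [hb 1]
      · have h2 : 0 < z 2 := tail_pos hα0 hα1 hl hε hzR hzT hp 2 (by omega)
        nlinarith [hb 1]
  have hsym : ∀ n : ℤ, x (-n) = (-1:ℝ)^n * x n := by
    intro n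
    have h := hzero n
    rw [hz] at h
    have h2 : x n = (-1:ℝ)^n * x (-n) := by
      simpa [hy] using sub_eq_zero.mp h
    have h3 := congrArg (fun r => (-1:ℝ)^n * r) h2
    simpa [← mul_assoc, negone_zpow_sq] using h3.symm
  have hx1ne : x 1 ≠ 0 := by
    intro h1
    have h2 := tail_zero hα0 hα1 hl hε hx hdT h1
    have := all_zero hα0 hα1 hx (m := 1) h1 (by norm_num [h2])
    obtain ⟨n, hn⟩ := hnz
    exact hn (this n)
  rcases lt_or_gt_of_ne hx1ne with hn | hp
  · -- use -x
    have hxR' : Rec α ε l (fun n => - x n) := rec_neg hx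
    have hsym' : ∀ n : ℤ, (fun n => - x n) (-n) = (-1:ℝ)^n * (fun n => - x n) n := by
      intro n; simp only []; rw [hsym n]; ring
    have hpos' : ∀ n : ℤ, 1 ≤ n → 0 < (fun n => - x n) n := by
      have hdT' : Filter.Tendsto (fun n : ℤ => - x n) Filter.atTop (nhds 0) := by
        simpa using hdT.neg
      exact tail_pos hα0 hα1 hl hε hxR' hdT' (by simpa using hn)
    exact key_pos hα0 hα1 hl hε hxR' hsym' hpos'
  · exact key_pos hα0 hα1 hl hε hx hsym (tail_pos hα0 hα1 hl hε hx hdT hp)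

lemma key (hα0 : 0 < α) (hα1 : α < 1) (hl : 0 < l) (hε : 0 < ε)
    (hEig : IsLineEig α ε (0,-1) ((l:ℝ):ℂ)) :
    ∃ t : ℤ → ℝ, (∀ n : ℤ, 2 ≤ n → 0 < t n) ∧
      (∀ n : ℤ, 2 ≤ n → t n * ((l + ε * cc α n) + t (n+1)) = aa α (n-1) * aa α n) ∧
      (l + ε * cc α 0) * ((l + ε * cc α 1) + t 2) = -2 * (aa α 0 * aa α 1) := by
  obtain ⟨ω, hmem, hne, hLE⟩ := hEig
  obtain ⟨hre, him⟩ := lineEqn_to_rec hLE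
  have hdre := decay_of_memlp hmem (fun n => (ω n).re) (fun n => by
    exact Complex.abs_re_le_norm _)
  have hdim := decay_of_memlp hmem (fun n => (ω n).im) (fun n => by
    exact Complex.abs_im_le_norm _)
  by_cases hR : ∃ n, (ω n).re ≠ 0
  · exact key_real hα0 hα1 hl hε hre hdre.1 hdre.2 hR
  · have hI : ∃ n, (ω n).im ≠ 0 := by
      push_neg at hR
      by_contra hI
      push_neg at hI
      apply hne
      funext n
      exact Complex.ext (by simpa using hR n) (by simpa using hI n)
    exact key_real hα0 hα1 hl hε him hdim.1 hdim.2 hI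

end Key
section Bounds
variable {α ε l : ℝ}

lemma cc0 : cc α 0 = α^2 := by unfold cc; norm_num
lemma cc1 : cc α 1 = 1 + α^2 := by unfold cc; norm_num
lemma cc2 : cc α 2 = 4 + α^2 := by unfold cc; norm_num

lemma Mval_eq (hα0 : 0 < α) : -2*(aa α 0 * aa α 1) = α^2*(1-α^2)/(2*(α^2+1)) := by
  have h1 : α ≠ 0 := ne_of_gt hα0
  have h2 : α^2 + 1 ≠ 0 := by positivity
  unfold aa cc
  push_cast
  norm_num
  field_simp
  ring

lemma Kval_eq (hα0 : 0 < α) : aa α 1 * aa α 2 = α^4*(α^2+3)/(4*(α^2+1)*(α^2+4)) := by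
  have h2 : α^2 + 1 ≠ 0 := by positivity
  have h3 : α^2 + 4 ≠ 0 := by positivity
  unfold aa cc
  push_cast
  norm_num
  field_simp
  ring

lemma MK_pos (h05 : 0.5 < α) (h08 : α < 0.8469) :
    0 < α ^ 2 * (1 - α ^ 2) / (2 * (α ^ 2 + 1))
      - α ^ 4 * (α ^ 2 + 3) / (4 * (α ^ 2 + 1) * (α ^ 2 + 4)) := by
  have hα0 : 0 < α := by linarith
  have ha2 : α^2 < 0.71723961 := by nlinarith
  have ha4 : α^4 < 0.5145 := by nlinarith
  have h8 : 0 < 8 - 9*α^2 - 3*α^4 := by nlinarith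
  have heq : α ^ 2 * (1 - α ^ 2) / (2 * (α ^ 2 + 1))
      - α ^ 4 * (α ^ 2 + 3) / (4 * (α ^ 2 + 1) * (α ^ 2 + 4))
      = α^2 * (8 - 9*α^2 - 3*α^4) / (4*(α^2+1)*(α^2+4)) := by
    have h2 : α^2 + 1 ≠ 0 := by positivity
    have h3 : α^2 + 4 ≠ 0 := by positivity
    field_simp
    ring
  rw [heq]
  positivity

lemma Mpos (h05 : 0.5 < α) (h08 : α < 0.8469) :
    0 < α ^ 2 * (1 - α ^ 2) / (2 * (α ^ 2 + 1)) := by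
  have hα0 : 0 < α := by linarith
  have : α^2 < 1 := by nlinarith
  have h1 : 0 < 1 - α^2 := by linarith
  positivity

lemma bounds_of_eig (h05 : 0.5 < α) (h08 : α < 0.8469) (hε : 0 < ε) (hl : 0 < l)
    (hEig : IsLineEig α ε (0,-1) ((l:ℝ):ℂ)) :
    Real.sqrt (α ^ 2 * (1 - α ^ 2) / (2 * (α ^ 2 + 1))
        - α ^ 4 * (α ^ 2 + 3) / (4 * (α ^ 2 + 1) * (α ^ 2 + 4))) - ε * (α ^ 2 + 1) < l
      ∧ l < Real.sqrt (α ^ 2 * (1 - α ^ 2) / (2 * (α ^ 2 + 1))) - ε * α ^ 2 := by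
  have hα0 : 0 < α := by linarith
  have hα1 : α < 1 := by linarith
  obtain ⟨t, htpos, htrel, htop⟩ := key hα0 hα1 hl hε hEig
  set M' : ℝ := α ^ 2 * (1 - α ^ 2) / (2 * (α ^ 2 + 1)) with hM
  set K' : ℝ := α ^ 4 * (α ^ 2 + 3) / (4 * (α ^ 2 + 1) * (α ^ 2 + 4)) with hK
  have hMeq : -2*(aa α 0 * aa α 1) = M' := Mval_eq hα0
  have hKeq : aa α 1 * aa α 2 = K' := Kval_eq hα0
  have ht2 : 0 < t 2 := htpos 2 le_rfl
  have ht3 : 0 < t 3 := htpos 3 (by norm_num)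
  have hrel2 := htrel 2 le_rfl
  rw [show (2:ℤ)+1 = 3 from rfl, show (2:ℤ)-1 = 1 from rfl] at hrel2
  rw [hKeq] at hrel2
  rw [hMeq] at htop
  rw [cc0, cc1] at htop
  rw [cc2] at hrel2
  -- htop : (l + ε*α^2) * ((l + ε*(1+α^2)) + t 2) = M'
  -- hrel2 : t 2 * ((l + ε*(4+α^2)) + t 3) = K'
  have hb0 : 0 < l + ε*α^2 := by positivity
  have hb1 : 0 < l + ε*(1+α^2) := by positivity
  have hb01 : l + ε*α^2 < l + ε*(1+α^2) := by nlinarith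
  constructor
  · -- lower bound
    have hKb : (l + ε*(1+α^2)) * t 2 < K' := by nlinarith
    have hsq : M' - K' < (l + ε*(1+α^2))^2 := by nlinarith
    have hlt : Real.sqrt (M' - K') < l + ε*(1+α^2) := by
      rw [Real.sqrt_lt' hb1]
      exact hsq
    have : ε * (α^2+1) = ε*(1+α^2) := by ring
    linarith
  · -- upper bound
    have hsq : (l + ε*α^2)^2 < M' := by nlinarith
    have hlt : l + ε*α^2 < Real.sqrt M' := by
      rw [Real.lt_sqrt (le_of_lt hb0)]
      exact hsq
    linarith

end Bounds
section CF
variable {α ν μ : ℝ}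

/-- numerator -/
noncomputable def KK (α : ℝ) (n : ℤ) : ℝ := aa α (n-1) * aa α n
/-- denominator base -/
noncomputable def dd (α μ : ℝ) (n : ℤ) : ℝ := μ + cc α n

noncomputable def cf (α ν μ : ℝ) : ℕ → ℤ → ℝ
  | 0, _ => 0
  | m+1, n => ν * KK α n / (dd α μ n + cf α ν μ m (n+1))

lemma cf_zero (n : ℤ) : cf α ν μ 0 n = 0 := rfl
lemma cf_succ (m : ℕ) (n : ℤ) :
    cf α ν μ (m+1) n = ν * KK α n / (dd α μ n + cf α ν μ m (n+1)) := rfl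

lemma KK_pos (hα0 : 0 < α) {n : ℤ} (hn : 2 ≤ n) : 0 < KK α n :=
  mul_pos (aa_pos hα0 (by omega)) (aa_pos hα0 (by omega))

lemma KK_lt (hα0 : 0 < α) (hα1 : α < 1) {n : ℤ} (hn : 2 ≤ n) : KK α n < 1/4 := by
  have h1 : aa α (n-1) < α/2 := aa_lt hα0 _
  have h2 : aa α n < α/2 := aa_lt hα0 _
  have h3 : 0 < aa α (n-1) := aa_pos hα0 (by omega)
  have h4 : 0 < aa α n := aa_pos hα0 (by omega)
  unfold KK
  nlinarith

lemma dd_pos (hα0 : 0 < α) (hμ : 0 < μ) (n : ℤ) : 0 < dd α μ n := by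
  have := cc_pos hα0 (α := α) n; unfold dd; linarith

lemma dd_ge_sq (hα0 : 0 < α) (hμ : 0 < μ) (n : ℤ) : (n:ℝ)^2 ≤ dd α μ n := by
  have := cc_ge_sq hα0 (α := α) n; unfold dd; linarith

lemma cf_nonneg (hα0 : 0 < α) (hν : 0 < ν) (hμ : 0 < μ) :
    ∀ m : ℕ, ∀ n : ℤ, 2 ≤ n → 0 ≤ cf α ν μ m n := by
  intro m
  induction m with
  | zero => intro n _; rw [cf_zero]
  | succ k ih =>
    intro n hn
    rw [cf_succ]
    have h1 : 0 < dd α μ n + cf α ν μ k (n+1) :=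
      add_pos_of_pos_of_nonneg (dd_pos hα0 hμ n) (ih (n+1) (by omega))
    have h2 : 0 < KK α n := KK_pos hα0 hn
    positivity

lemma cf_denpos (hα0 : 0 < α) (hν : 0 < ν) (hμ : 0 < μ) (m : ℕ) {n : ℤ} (hn : 2 ≤ n) :
    0 < dd α μ n + cf α ν μ m (n+1) :=
  add_pos_of_pos_of_nonneg (dd_pos hα0 hμ n) (cf_nonneg hα0 hν hμ m (n+1) (by omega))

lemma cf_pos (hα0 : 0 < α) (hν : 0 < ν) (hμ : 0 < μ) (m : ℕ) {n : ℤ} (hn : 2 ≤ n) :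
    0 < cf α ν μ (m+1) n := by
  rw [cf_succ]
  exact div_pos (mul_pos hν (KK_pos hα0 hn)) (cf_denpos hα0 hν hμ m hn)

lemma cf_le (hα0 : 0 < α) (hν : 0 < ν) (hμ : 0 < μ) (m : ℕ) {n : ℤ} (hn : 2 ≤ n) :
    cf α ν μ m n ≤ ν * KK α n / dd α μ n := by
  cases m with
  | zero =>
    rw [cf_zero]
    have h1 := dd_pos hα0 hμ (α := α) (μ := μ) n
    have h2 := KK_pos hα0 hn
    exact le_of_lt (div_pos (mul_pos hν h2) h1)
  | succ k =>
    rw [cf_succ]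
    apply div_le_div_of_nonneg_left _ (dd_pos hα0 hμ n) _
    · exact (mul_pos hν (KK_pos hα0 hn)).le
    · exact le_add_of_nonneg_right (cf_nonneg hα0 hν hμ k (n+1) (by omega))

/-- antitone step -/
lemma cf_step_anti (hα0 : 0 < α) (hν : 0 < ν) (hμ : 0 < μ) {n : ℤ} (hn : 2 ≤ n)
    {u v : ℝ} (hu : 0 ≤ u) (huv : u ≤ v) :
    ν * KK α n / (dd α μ n + v) ≤ ν * KK α n / (dd α μ n + u) := by
  apply div_le_div_of_nonneg_left _ _ _
  · exact (mul_pos hν (KK_pos hα0 hn)).le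
  · linarith [dd_pos hα0 hμ (α := α) (μ := μ) n]
  · linarith

lemma cf_parity2 (hα0 : 0 < α) (hν : 0 < ν) (hμ : 0 < μ) :
    ∀ m : ℕ, ∀ n : ℤ, 2 ≤ n →
      (Even m → cf α ν μ m n ≤ cf α ν μ (m+2) n)
        ∧ (¬ Even m → cf α ν μ (m+2) n ≤ cf α ν μ m n) := by
  intro m
  induction m with
  | zero =>
    intro n hn
    refine ⟨fun _ => ?_, fun h => absurd Even.zero h⟩
    rw [cf_zero]
    exact cf_nonneg hα0 hν hμ 2 n hn
  | succ k ih =>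
    intro n hn
    constructor
    · intro hev
      have hk : ¬ Even k := by
        intro h; exact (Nat.even_add_one.mp hev) h
      have := (ih (n+1) (by omega)).2 hk
      rw [cf_succ, cf_succ]
      exact cf_step_anti hα0 hν hμ hn (cf_nonneg hα0 hν hμ (k+2) (n+1) (by omega)) this
    · intro hodd
      have hk : Even k := by
        by_contra h
        exact hodd (Nat.even_add_one.mpr h)
      have := (ih (n+1) (by omega)).1 hk
      rw [cf_succ, cf_succ]
      exact cf_step_anti hα0 hν hμ hn (cf_nonneg hα0 hν hμ k (n+1) (by omega)) this

lemma cf_parity1 (hα0 : 0 < α) (hν : 0 < ν) (hμ : 0 < μ) :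
    ∀ m : ℕ, ∀ n : ℤ, 2 ≤ n →
      (Even m → cf α ν μ m n ≤ cf α ν μ (m+1) n)
        ∧ (¬ Even m → cf α ν μ (m+1) n ≤ cf α ν μ m n) := by
  intro m
  induction m with
  | zero =>
    intro n hn
    refine ⟨fun _ => ?_, fun h => absurd Even.zero h⟩
    rw [cf_zero]
    exact cf_nonneg hα0 hν hμ 1 n hn
  | succ k ih =>
    intro n hn
    constructor
    · intro hev
      have hk : ¬ Even k := fun h => (Nat.even_add_one.mp hev) h
      have := (ih (n+1) (by omega)).2 hk
      rw [cf_succ, cf_succ]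
      exact cf_step_anti hα0 hν hμ hn (cf_nonneg hα0 hν hμ (k+1) (n+1) (by omega)) this
    · intro hodd
      have hk : Even k := by
        by_contra h
        exact hodd (Nat.even_add_one.mpr h)
      have := (ih (n+1) (by omega)).1 hk
      rw [cf_succ, cf_succ]
      exact cf_step_anti hα0 hν hμ hn (cf_nonneg hα0 hν hμ k (n+1) (by omega)) this

lemma cf_even_mono (hα0 : 0 < α) (hν : 0 < ν) (hμ : 0 < μ) {n : ℤ} (hn : 2 ≤ n) :
    Monotone (fun k : ℕ => cf α ν μ (2*k) n) := by
  apply monotone_nat_of_le_succ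
  intro k
  have h := (cf_parity2 hα0 hν hμ (2*k) n hn).1 (even_two_mul k)
  have e : 2*(k+1) = 2*k+2 := by ring
  rw [e]
  exact h

lemma cf_odd_anti (hα0 : 0 < α) (hν : 0 < ν) (hμ : 0 < μ) {n : ℤ} (hn : 2 ≤ n) :
    Antitone (fun k : ℕ => cf α ν μ (2*k+1) n) := by
  apply antitone_nat_of_succ_le
  intro k
  have h := (cf_parity2 hα0 hν hμ (2*k+1) n hn).2 (by simp [Nat.even_add_one, parity_simps])
  have e : 2*(k+1)+1 = 2*k+1+2 := by ring
  rw [e]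
  exact h

lemma cf_even_le_odd (hα0 : 0 < α) (hν : 0 < ν) (hμ : 0 < μ) {n : ℤ} (hn : 2 ≤ n)
    (k j : ℕ) : cf α ν μ (2*k) n ≤ cf α ν μ (2*j+1) n := by
  have h1 : cf α ν μ (2*k) n ≤ cf α ν μ (2*(max k j)) n :=
    cf_even_mono hα0 hν hμ hn (le_max_left k j)
  have h2 : cf α ν μ (2*(max k j)) n ≤ cf α ν μ (2*(max k j)+1) n :=
    (cf_parity1 hα0 hν hμ (2*(max k j)) n hn).1 (even_two_mul _)
  have h3 : cf α ν μ (2*(max k j)+1) n ≤ cf α ν μ (2*j+1) n :=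
    cf_odd_anti hα0 hν hμ hn (le_max_right k j)
  linarith

end CF
section CFlim
variable {α ν μ : ℝ}

noncomputable def Ecf (α ν μ : ℝ) (n : ℤ) : ℝ := ⨆ k : ℕ, cf α ν μ (2*k) n
noncomputable def Ocf (α ν μ : ℝ) (n : ℤ) : ℝ := ⨅ k : ℕ, cf α ν μ (2*k+1) n

lemma cf_even_bdd (hα0 : 0 < α) (hν : 0 < ν) (hμ : 0 < μ) {n : ℤ} (hn : 2 ≤ n) :
    BddAbove (Set.range fun k : ℕ => cf α ν μ (2*k) n) := by
  refine ⟨ν * KK α n / dd α μ n, ?_⟩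
  rintro x ⟨k, rfl⟩
  exact cf_le hα0 hν hμ (2*k) hn

lemma cf_odd_bddb (hα0 : 0 < α) (hν : 0 < ν) (hμ : 0 < μ) {n : ℤ} (hn : 2 ≤ n) :
    BddBelow (Set.range fun k : ℕ => cf α ν μ (2*k+1) n) := by
  refine ⟨0, ?_⟩
  rintro x ⟨k, rfl⟩
  exact cf_nonneg hα0 hν hμ (2*k+1) n hn

lemma tendsto_Ecf (hα0 : 0 < α) (hν : 0 < ν) (hμ : 0 < μ) {n : ℤ} (hn : 2 ≤ n) :
    Filter.Tendsto (fun k : ℕ => cf α ν μ (2*k) n) Filter.atTop (nhds (Ecf α ν μ n)) :=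
  tendsto_atTop_ciSup (cf_even_mono hα0 hν hμ hn) (cf_even_bdd hα0 hν hμ hn)

lemma tendsto_Ocf (hα0 : 0 < α) (hν : 0 < ν) (hμ : 0 < μ) {n : ℤ} (hn : 2 ≤ n) :
    Filter.Tendsto (fun k : ℕ => cf α ν μ (2*k+1) n) Filter.atTop (nhds (Ocf α ν μ n)) :=
  tendsto_atTop_ciInf (cf_odd_anti hα0 hν hμ hn) (cf_odd_bddb hα0 hν hμ hn)

lemma cf_le_Ecf (hα0 : 0 < α) (hν : 0 < ν) (hμ : 0 < μ) {n : ℤ} (hn : 2 ≤ n) (k : ℕ) :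
    cf α ν μ (2*k) n ≤ Ecf α ν μ n :=
  le_ciSup (cf_even_bdd hα0 hν hμ hn) k

lemma Ecf_nonneg (hα0 : 0 < α) (hν : 0 < ν) (hμ : 0 < μ) {n : ℤ} (hn : 2 ≤ n) :
    0 ≤ Ecf α ν μ n := by
  have := cf_le_Ecf hα0 hν hμ hn 0
  rw [show 2*0 = 0 from rfl, cf_zero] at this
  exact this

lemma Ocf_le_cf (hα0 : 0 < α) (hν : 0 < ν) (hμ : 0 < μ) {n : ℤ} (hn : 2 ≤ n) (j : ℕ) :
    Ocf α ν μ n ≤ cf α ν μ (2*j+1) n :=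
  ciInf_le (cf_odd_bddb hα0 hν hμ hn) j

lemma Ocf_nonneg (hα0 : 0 < α) (hν : 0 < ν) (hμ : 0 < μ) {n : ℤ} (hn : 2 ≤ n) :
    0 ≤ Ocf α ν μ n :=
  le_ciInf fun j => cf_nonneg hα0 hν hμ (2*j+1) n hn

lemma Ecf_le_Ocf (hα0 : 0 < α) (hν : 0 < ν) (hμ : 0 < μ) {n : ℤ} (hn : 2 ≤ n) :
    Ecf α ν μ n ≤ Ocf α ν μ n :=
  ciSup_le fun k => le_ciInf fun j => cf_even_le_odd hα0 hν hμ hn k j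

lemma Ecf_le (hα0 : 0 < α) (hν : 0 < ν) (hμ : 0 < μ) {n : ℤ} (hn : 2 ≤ n) :
    Ecf α ν μ n ≤ ν * KK α n / dd α μ n :=
  ciSup_le fun k => cf_le hα0 hν hμ (2*k) hn

lemma Ocf_le (hα0 : 0 < α) (hν : 0 < ν) (hμ : 0 < μ) {n : ℤ} (hn : 2 ≤ n) :
    Ocf α ν μ n ≤ ν * KK α n / dd α μ n := by
  have h := Ocf_le_cf hα0 hν hμ hn 0
  rw [show 2*0+1 = 1 from rfl] at h
  calc Ocf α ν μ n ≤ cf α ν μ 1 n := h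
    _ ≤ ν * KK α n / dd α μ n := cf_le hα0 hν hμ 1 hn

lemma Ocf_eq (hα0 : 0 < α) (hν : 0 < ν) (hμ : 0 < μ) {n : ℤ} (hn : 2 ≤ n) :
    Ocf α ν μ n = ν * KK α n / (dd α μ n + Ecf α ν μ (n+1)) := by
  have h1 := tendsto_Ocf hα0 hν hμ hn
  have e : (fun k : ℕ => cf α ν μ (2*k+1) n)
      = (fun k : ℕ => ν * KK α n / (dd α μ n + cf α ν μ (2*k) (n+1))) := by
    funext k; exact cf_succ (2*k) n
  rw [e] at h1
  have hden : 0 < dd α μ n + Ecf α ν μ (n+1) :=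
    add_pos_of_pos_of_nonneg (dd_pos hα0 hμ n) (Ecf_nonneg hα0 hν hμ (by omega))
  have h3 : Filter.Tendsto (fun k : ℕ => ν * KK α n / (dd α μ n + cf α ν μ (2*k) (n+1)))
      Filter.atTop (nhds (ν * KK α n / (dd α μ n + Ecf α ν μ (n+1)))) := by
    apply Filter.Tendsto.div tendsto_const_nhds
      (tendsto_const_nhds.add (tendsto_Ecf hα0 hν hμ (by omega)))
    exact ne_of_gt hden
  exact tendsto_nhds_unique h1 h3

lemma Ecf_eq (hα0 : 0 < α) (hν : 0 < ν) (hμ : 0 < μ) {n : ℤ} (hn : 2 ≤ n) :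
    Ecf α ν μ n = ν * KK α n / (dd α μ n + Ocf α ν μ (n+1)) := by
  have h0 := tendsto_Ecf hα0 hν hμ (n := n) hn
  have h1 : Filter.Tendsto (fun k : ℕ => cf α ν μ (2*(k+1)) n) Filter.atTop
      (nhds (Ecf α ν μ n)) := by
    have := h0.comp (Filter.tendsto_add_atTop_nat 1)
    exact this
  have e : (fun k : ℕ => cf α ν μ (2*(k+1)) n)
      = (fun k : ℕ => ν * KK α n / (dd α μ n + cf α ν μ (2*k+1) (n+1))) := by
    funext k
    have e2 : 2*(k+1) = (2*k+1)+1 := by ring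
    rw [e2]
    exact cf_succ (2*k+1) n
  rw [e] at h1
  have hden : 0 < dd α μ n + Ocf α ν μ (n+1) :=
    add_pos_of_pos_of_nonneg (dd_pos hα0 hμ n) (Ocf_nonneg hα0 hν hμ (by omega))
  have h3 : Filter.Tendsto (fun k : ℕ => ν * KK α n / (dd α μ n + cf α ν μ (2*k+1) (n+1)))
      Filter.atTop (nhds (ν * KK α n / (dd α μ n + Ocf α ν μ (n+1)))) := by
    apply Filter.Tendsto.div tendsto_const_nhds
      (tendsto_const_nhds.add (tendsto_Ocf hα0 hν hμ (by omega)))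
    exact ne_of_gt hden
  exact tendsto_nhds_unique h1 h3

lemma gap_rec (hα0 : 0 < α) (hν : 0 < ν) (hμ : 0 < μ) {n : ℤ} (hn : 2 ≤ n) :
    (Ocf α ν μ n - Ecf α ν μ n) * (dd α μ n)^2
      ≤ ν * KK α n * (Ocf α ν μ (n+1) - Ecf α ν μ (n+1)) := by
  have hE' := Ecf_nonneg hα0 hν hμ (n := n+1) (by omega)
  have hO' := Ocf_nonneg hα0 hν hμ (n := n+1) (by omega)
  have hEO' := Ecf_le_Ocf hα0 hν hμ (n := n+1) (by omega)
  have hd := dd_pos hα0 hμ (α := α) (μ := μ) n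
  have hK := KK_pos hα0 hn
  have hA : 0 < dd α μ n + Ecf α ν μ (n+1) := by linarith
  have hB : 0 < dd α μ n + Ocf α ν μ (n+1) := by linarith
  rw [Ocf_eq hα0 hν hμ hn, Ecf_eq hα0 hν hμ hn]
  have hident : ν * KK α n / (dd α μ n + Ecf α ν μ (n+1))
      - ν * KK α n / (dd α μ n + Ocf α ν μ (n+1))
      = ν * KK α n * (Ocf α ν μ (n+1) - Ecf α ν μ (n+1))
        / ((dd α μ n + Ecf α ν μ (n+1)) * (dd α μ n + Ocf α ν μ (n+1))) := by
    field_simp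
    ring
  rw [hident]
  rw [div_mul_eq_mul_div, div_le_iff₀ (by positivity)]
  have hstep : (dd α μ n)^2 ≤ (dd α μ n + Ecf α ν μ (n+1)) * (dd α μ n + Ocf α ν μ (n+1)) := by
    nlinarith
  nlinarith [mul_pos hν hK, mul_nonneg (mul_pos hν hK).le (sub_nonneg.mpr hEO')]

lemma gap_le (hα0 : 0 < α) (hα1 : α < 1) (hν : 0 < ν) (hμ : 0 < μ) {n : ℤ} (hn : 2 ≤ n) :
    Ocf α ν μ n - Ecf α ν μ n ≤ ν / (4 * (n:ℝ)^2) := by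
  have hE := Ecf_nonneg hα0 hν hμ hn
  have h1 := Ocf_le hα0 hν hμ hn
  have hd := dd_pos hα0 hμ (α := α) (μ := μ) n
  have hK := KK_pos hα0 hn
  have hKl := KK_lt hα0 hα1 hn
  have hn2 : (2:ℝ) ≤ (n:ℝ) := by exact_mod_cast hn
  have hdsq : (n:ℝ)^2 ≤ dd α μ n := dd_ge_sq hα0 hμ n
  have hnp : (0:ℝ) < (n:ℝ)^2 := by positivity
  have h2 : ν * KK α n / dd α μ n ≤ ν / (4*(n:ℝ)^2) := by
    rw [div_le_div_iff₀ hd (by positivity)]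
    have h3 : 0 ≤ (ν * (n:ℝ)^2) * (1/4 - KK α n) :=
      mul_nonneg (mul_pos hν hnp).le (by linarith)
    have h4 : ν * (n:ℝ)^2 ≤ ν * dd α μ n := mul_le_mul_of_nonneg_left hdsq hν.le
    nlinarith
  linarith

end CFlim
section CFgap
variable {α ν μ : ℝ}

lemma gap_zero (hα0 : 0 < α) (hα1 : α < 1) (hν : 0 < ν) (hμ : 0 < μ) :
    ∀ n : ℤ, 2 ≤ n → Ocf α ν μ n = Ecf α ν μ n := by
  set g : ℤ → ℝ := fun n => Ocf α ν μ n - Ecf α ν μ n with hg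
  set n₀ : ℤ := max 2 ⌈ν⌉ with hn₀
  have hn₀2 : 2 ≤ n₀ := le_max_left _ _
  have hν_le : ∀ n : ℤ, n₀ ≤ n → ν ≤ (n:ℝ) := by
    intro n hn
    have h1 : (⌈ν⌉ : ℤ) ≤ n := le_trans (le_max_right _ _) hn
    have h2 : ((⌈ν⌉:ℤ) : ℝ) ≤ (n:ℝ) := by exact_mod_cast h1
    linarith [Int.le_ceil ν]
  have hgnn : ∀ n : ℤ, 2 ≤ n → 0 ≤ g n := by
    intro n hn; simp only [hg]; linarith [Ecf_le_Ocf hα0 hν hμ hn]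
  have step1 : ∀ n : ℤ, n₀ ≤ n → g n ≤ g (n+1) := by
    intro n hn
    have hn2 : 2 ≤ n := le_trans hn₀2 hn
    have hrec := gap_rec hα0 hν hμ hn2
    have hg1 := hgnn (n+1) (by omega)
    have hd := dd_pos hα0 hμ (α := α) (μ := μ) n
    have hK := KK_pos hα0 hn2
    have hKl := KK_lt hα0 hα1 hn2
    have hdsq := dd_ge_sq hα0 hμ (α := α) (μ := μ) n
    have hnn : (2:ℝ) ≤ (n:ℝ) := by exact_mod_cast hn2
    have hνn := hν_le n hn
    have hn4 : (4:ℝ) ≤ (n:ℝ)^2 := by nlinarith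
    have hdd4 : (4:ℝ) ≤ dd α μ n := by linarith
    have hKd : ν * KK α n ≤ (dd α μ n)^2 := by nlinarith
    have h2 : ν * KK α n * g (n+1) ≤ (dd α μ n)^2 * g (n+1) :=
      mul_le_mul_of_nonneg_right hKd hg1
    have h3 : g n * (dd α μ n)^2 ≤ (dd α μ n)^2 * g (n+1) := by
      calc g n * (dd α μ n)^2 ≤ ν * KK α n * g (n+1) := hrec
        _ ≤ (dd α μ n)^2 * g (n+1) := h2
    have hd2 : 0 < (dd α μ n)^2 := by positivity
    nlinarith
  have step2 : ∀ n : ℤ, n₀ ≤ n → ∀ m : ℤ, n ≤ m → g n ≤ g m := by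
    intro n hn m hm
    refine Int.le_induction (motive := fun m _ => g n ≤ g m) le_rfl
      (fun m' hm' ih => le_trans ih (step1 m' (le_trans hn hm'))) m hm
  have step3 : ∀ n : ℤ, n₀ ≤ n → g n = 0 := by
    intro n hn
    have hn2 : 2 ≤ n := le_trans hn₀2 hn
    refine le_antisymm ?_ (hgnn n hn2)
    by_contra hc
    push_neg at hc
    set m : ℤ := max n (⌈ν/(4*g n)⌉ + 1) with hm
    have hm1 : n ≤ m := le_max_left _ _
    have hm2r : ν/(4*g n) < (m:ℝ) := by
      have h1 : (⌈ν/(4*g n)⌉ + 1 : ℤ) ≤ m := le_max_right _ _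
      have h2 : ((⌈ν/(4*g n)⌉ + 1 : ℤ) : ℝ) ≤ (m:ℝ) := by exact_mod_cast h1
      push_cast at h2
      linarith [Int.le_ceil (ν/(4*g n))]
    have hmn2 : 2 ≤ m := le_trans hn2 hm1
    have hmreal : (2:ℝ) ≤ (m:ℝ) := by exact_mod_cast hmn2
    have h4 : g n ≤ g m := step2 n hn m hm1
    have h5 : g m ≤ ν / (4*(m:ℝ)^2) := gap_le hα0 hα1 hν hμ hmn2
    have h6 : ν < 4*(m:ℝ)*g n := by
      rw [div_lt_iff₀ (by nlinarith)] at hm2r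
      nlinarith
    have h7 : g n * (4*(m:ℝ)^2) ≤ ν :=
      (le_div_iff₀ (show (0:ℝ) < 4*(m:ℝ)^2 by positivity)).mp (le_trans h4 h5)
    nlinarith [mul_nonneg hc.le (show (0:ℝ) ≤ (m:ℝ)^2 - 2*(m:ℝ) by nlinarith)]
  have step4 : ∀ k : ℕ, ∀ n : ℤ, 2 ≤ n → n₀ ≤ n + (k:ℤ) → g n = 0 := by
    intro k
    induction k with
    | zero => intro n hn h; exact step3 n (by simpa using h)
    | succ j ih =>
      intro n hn h
      have h1 : g (n+1) = 0 := by
        apply ih (n+1) (by omega)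
        push_cast at h ⊢
        omega
      have hrec := gap_rec hα0 hν hμ hn
      have hd := dd_pos hα0 hμ (α := α) (μ := μ) n
      have hgn := hgnn n hn
      have h2 : g n * (dd α μ n)^2 ≤ 0 := by
        have : ν * KK α n * g (n+1) = 0 := by rw [show g (n+1) = 0 from h1]; ring
        calc g n * (dd α μ n)^2 ≤ ν * KK α n * g (n+1) := hrec
          _ = 0 := this
      have hd2 : 0 < (dd α μ n)^2 := by positivity
      nlinarith
  intro n hn
  have h := step4 (n₀ - n).toNat n hn (by
    have h1 : (n₀ - n) ≤ ((n₀ - n).toNat : ℤ) := Int.self_le_toNat _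
    omega)
  simp only [hg] at h
  linarith [h]

end CFgap

section SSdef
variable {α ν μ : ℝ}

noncomputable def SS (α ν μ : ℝ) (n : ℤ) : ℝ := Ecf α ν μ n

lemma SS_pos (hα0 : 0 < α) (hν : 0 < ν) (hμ : 0 < μ) {n : ℤ} (hn : 2 ≤ n) :
    0 < SS α ν μ n := by
  have h1 : 0 < cf α ν μ 2 n := cf_pos hα0 hν hμ 1 hn
  have h2 := cf_le_Ecf hα0 hν hμ hn 1
  rw [show 2*1 = 2 from rfl] at h2
  unfold SS
  linarith

lemma SS_nonneg (hα0 : 0 < α) (hν : 0 < ν) (hμ : 0 < μ) {n : ℤ} (hn : 2 ≤ n) :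
    0 ≤ SS α ν μ n := (SS_pos hα0 hν hμ hn).le

lemma SS_le (hα0 : 0 < α) (hν : 0 < ν) (hμ : 0 < μ) {n : ℤ} (hn : 2 ≤ n) :
    SS α ν μ n ≤ ν * KK α n / dd α μ n := Ecf_le hα0 hν hμ hn

lemma SS_rec (hα0 : 0 < α) (hα1 : α < 1) (hν : 0 < ν) (hμ : 0 < μ) {n : ℤ} (hn : 2 ≤ n) :
    SS α ν μ n * (dd α μ n + SS α ν μ (n+1)) = ν * KK α n := by
  have h := Ecf_eq hα0 hν hμ hn
  rw [gap_zero hα0 hα1 hν hμ (n+1) (by omega)] at h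
  have hden : 0 < dd α μ n + Ecf α ν μ (n+1) :=
    add_pos_of_pos_of_nonneg (dd_pos hα0 hμ n) (Ecf_nonneg hα0 hν hμ (by omega))
  unfold SS
  rw [h]
  exact div_mul_cancel₀ _ (ne_of_gt hden)

lemma cf_bracket (hα0 : 0 < α) (hν : 0 < ν) (hμ : 0 < μ) {s : ℤ → ℝ}
    (hs : ∀ n : ℤ, 2 ≤ n → 0 < s n ∧ s n * (dd α μ n + s (n+1)) = ν * KK α n) :
    ∀ m : ℕ, ∀ n : ℤ, 2 ≤ n →
      (Even m → cf α ν μ m n ≤ s n) ∧ (¬ Even m → s n ≤ cf α ν μ m n) := by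
  intro m
  induction m with
  | zero =>
    intro n hn
    exact ⟨fun _ => by rw [cf_zero]; exact (hs n hn).1.le, fun h => absurd Even.zero h⟩
  | succ k ih =>
    intro n hn
    have hden : 0 < dd α μ n + s (n+1) :=
      add_pos_of_pos_of_nonneg (dd_pos hα0 hμ n) (hs (n+1) (by omega)).1.le
    have hseq : s n = ν * KK α n / (dd α μ n + s (n+1)) := by
      rw [eq_div_iff (ne_of_gt hden)]
      exact (hs n hn).2
    constructor
    · intro hev
      have hk : ¬ Even k := fun h => (Nat.even_add_one.mp hev) h
      have h1 : s (n+1) ≤ cf α ν μ k (n+1) := (ih (n+1) (by omega)).2 hk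
      rw [cf_succ, hseq]
      exact cf_step_anti hα0 hν hμ hn (hs (n+1) (by omega)).1.le h1
    · intro hodd
      have hk : Even k := by
        by_contra h
        exact hodd (Nat.even_add_one.mpr h)
      have h1 : cf α ν μ k (n+1) ≤ s (n+1) := (ih (n+1) (by omega)).1 hk
      rw [cf_succ, hseq]
      exact cf_step_anti hα0 hν hμ hn (cf_nonneg hα0 hν hμ k (n+1) (by omega)) h1

lemma cf_nu_mono (hα0 : 0 < α) (hμ : 0 < μ) {ν₁ ν₂ : ℝ} (h2 : 0 < ν₂) (h12 : ν₂ ≤ ν₁) :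
    ∀ m : ℕ, ∀ n : ℤ, 2 ≤ n →
      cf α ν₂ μ m n ≤ cf α ν₁ μ m n ∧ cf α ν₁ μ m n * ν₂ ≤ cf α ν₂ μ m n * ν₁ := by
  have h1 : 0 < ν₁ := lt_of_lt_of_le h2 h12
  intro m
  induction m with
  | zero =>
    intro n hn
    simp only [cf_zero]
    norm_num
  | succ k ih =>
    intro n hn
    obtain ⟨iha, ihb⟩ := ih (n+1) (by omega)
    have hK := KK_pos hα0 hn
    have hd := dd_pos hα0 hμ (α := α) (μ := μ) n
    have hx1 : 0 ≤ cf α ν₁ μ k (n+1) := cf_nonneg hα0 h1 hμ k (n+1) (by omega)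
    have hx2 : 0 ≤ cf α ν₂ μ k (n+1) := cf_nonneg hα0 h2 hμ k (n+1) (by omega)
    have hden1 : 0 < dd α μ n + cf α ν₁ μ k (n+1) := by linarith
    have hden2 : 0 < dd α μ n + cf α ν₂ μ k (n+1) := by linarith
    rw [cf_succ, cf_succ]
    constructor
    · rw [div_le_div_iff₀ hden2 hden1]
      nlinarith [mul_le_mul_of_nonneg_left ihb hK.le,
        mul_le_mul_of_nonneg_right (mul_le_mul_of_nonneg_right h12 hK.le) hd.le]
    · rw [div_mul_eq_mul_div, div_mul_eq_mul_div, div_le_div_iff₀ hden1 hden2]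
      nlinarith [mul_le_mul_of_nonneg_left iha (mul_nonneg (mul_nonneg h1.le h2.le) hK.le)]

lemma SS_nu_compare (hα0 : 0 < α) (hμ : 0 < μ) {ν₁ ν₂ : ℝ} (h2 : 0 < ν₂) (h12 : ν₂ ≤ ν₁)
    {s : ℤ → ℝ}
    (hs : ∀ n : ℤ, 2 ≤ n → 0 < s n ∧ s n * (dd α μ n + s (n+1)) = ν₂ * KK α n) :
    SS α ν₁ μ 2 * ν₂ ≤ s 2 * ν₁ := by
  have h1 : 0 < ν₁ := lt_of_lt_of_le h2 h12
  have hbound : ∀ k : ℕ, cf α ν₁ μ (2*k) 2 * ν₂ ≤ s 2 * ν₁ := by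
    intro k
    have ha := (cf_nu_mono hα0 hμ h2 h12 (2*k) 2 le_rfl).2
    have hb : cf α ν₂ μ (2*k) 2 ≤ s 2 :=
      (cf_bracket hα0 h2 hμ hs (2*k) 2 le_rfl).1 (even_two_mul k)
    calc cf α ν₁ μ (2*k) 2 * ν₂ ≤ cf α ν₂ μ (2*k) 2 * ν₁ := ha
      _ ≤ s 2 * ν₁ := mul_le_mul_of_nonneg_right hb h1.le
  have htend : Filter.Tendsto (fun k : ℕ => cf α ν₁ μ (2*k) 2 * ν₂) Filter.atTop
      (nhds (SS α ν₁ μ 2 * ν₂)) :=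
    (tendsto_Ecf hα0 h1 hμ le_rfl).mul_const ν₂
  exact le_of_tendsto' htend hbound

end SSdef
section CFcont
variable {α ν : ℝ}

lemma cf_contAt (hα0 : 0 < α) (hν : 0 < ν) :
    ∀ m : ℕ, ∀ n : ℤ, 2 ≤ n → ∀ μ₀ : ℝ, 0 < μ₀ →
      ContinuousAt (fun μ => cf α ν μ m n) μ₀ := by
  intro m
  induction m with
  | zero =>
    intro n hn μ₀ h
    simp only [cf_zero]
    exact continuousAt_const
  | succ k ih =>
    intro n hn μ₀ hμ₀
    have h1 : ContinuousAt (fun μ : ℝ => dd α μ n) μ₀ := by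
      show ContinuousAt (fun μ : ℝ => μ + cc α n) μ₀
      exact continuousAt_id.add continuousAt_const
    have hden : ContinuousAt (fun μ => dd α μ n + cf α ν μ k (n+1)) μ₀ :=
      h1.add (ih (n+1) (by omega) μ₀ hμ₀)
    have hne : dd α μ₀ n + cf α ν μ₀ k (n+1) ≠ 0 := ne_of_gt (cf_denpos hα0 hν hμ₀ k hn)
    simp only [cf_succ]
    exact ContinuousAt.div continuousAt_const hden hne

lemma SS_between (hα0 : 0 < α) (hν : 0 < ν) {μ : ℝ} (hμ : 0 < μ) {n : ℤ} (hn : 2 ≤ n)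
    (k : ℕ) : cf α ν μ (2*k) n ≤ SS α ν μ n ∧ SS α ν μ n ≤ cf α ν μ (2*k+1) n := by
  constructor
  · exact cf_le_Ecf hα0 hν hμ hn k
  · exact le_trans (Ecf_le_Ocf hα0 hν hμ hn) (Ocf_le_cf hα0 hν hμ hn k)

lemma SS_contAt (hα0 : 0 < α) (hα1 : α < 1) (hν : 0 < ν) {μ₀ : ℝ} (hμ₀ : 0 < μ₀)
    {n : ℤ} (hn : 2 ≤ n) : ContinuousAt (fun μ => SS α ν μ n) μ₀ := by
  rw [Metric.continuousAt_iff]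
  intro δ hδ
  -- gap at μ₀ tends to 0
  have hgap : Filter.Tendsto (fun k : ℕ => cf α ν μ₀ (2*k+1) n - cf α ν μ₀ (2*k) n)
      Filter.atTop (nhds 0) := by
    have h := (tendsto_Ocf hα0 hν hμ₀ hn).sub (tendsto_Ecf hα0 hν hμ₀ hn)
    rw [gap_zero hα0 hα1 hν hμ₀ n hn, sub_self] at h
    exact h
  have hev : ∃ k : ℕ, |cf α ν μ₀ (2*k+1) n - cf α ν μ₀ (2*k) n| < δ/4 := by
    have := (Metric.tendsto_nhds.mp hgap) (δ/4) (by linarith)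
    rw [Filter.eventually_atTop] at this
    obtain ⟨K0, hK0⟩ := this
    refine ⟨K0, ?_⟩
    have := hK0 K0 le_rfl
    rwa [Real.dist_eq, sub_zero] at this
  obtain ⟨k, hk⟩ := hev
  -- continuity of the two truncations at μ₀
  have hc1 := cf_contAt hα0 hν (2*k) n hn μ₀ hμ₀
  have hc2 := cf_contAt hα0 hν (2*k+1) n hn μ₀ hμ₀
  rw [Metric.continuousAt_iff] at hc1 hc2
  obtain ⟨η₁, hη₁, hcc1⟩ := hc1 (δ/4) (by linarith)
  obtain ⟨η₂, hη₂, hcc2⟩ := hc2 (δ/4) (by linarith)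
  refine ⟨min (min η₁ η₂) μ₀, by positivity, ?_⟩
  intro μ hdist
  have hd1 : dist μ μ₀ < η₁ := lt_of_lt_of_le hdist (le_trans (min_le_left _ _) (min_le_left _ _))
  have hd2 : dist μ μ₀ < η₂ := lt_of_lt_of_le hdist (le_trans (min_le_left _ _) (min_le_right _ _))
  have hdμ : dist μ μ₀ < μ₀ := lt_of_lt_of_le hdist (min_le_right _ _)
  have hμpos : 0 < μ := by
    rw [Real.dist_eq] at hdμ
    rcases abs_lt.mp hdμ with ⟨h1, _⟩
    linarith
  have e1 := hcc1 hd1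
  have e2 := hcc2 hd2
  rw [Real.dist_eq] at e1 e2 ⊢
  have hb1 := SS_between hα0 hν hμpos hn k
  have hb2 := SS_between hα0 hν hμ₀ hn k
  rcases abs_lt.mp e1 with ⟨e1a, e1b⟩
  rcases abs_lt.mp e2 with ⟨e2a, e2b⟩
  rcases abs_lt.mp hk with ⟨hka, hkb⟩
  rw [abs_lt]
  cases' hb1 with hb1a hb1b
  cases' hb2 with hb2a hb2b
  constructor
  · linarith
  · linarith

end CFcont
section Construct
variable {α ε : ℝ}

lemma negone_zpow_neg (n : ℤ) : (-1:ℝ)^(-n) = (-1:ℝ)^n := by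
  rw [zpow_neg]
  exact inv_eq_of_mul_eq_one_left (negone_zpow_sq n)

noncomputable def wseq (α ε ν μ : ℝ) : ℕ → ℝ
  | 0 => -2 * aa α 1 / (ε*μ + ε * cc α 0)
  | 1 => 1
  | (n+2) => (ε * SS α ν μ ((n:ℤ)+2) / aa α ((n:ℤ)+2)) * wseq α ε ν μ (n+1)

lemma wseq_succ (ν μ : ℝ) (n : ℕ) : wseq α ε ν μ (n+2)
    = (ε * SS α ν μ ((n:ℤ)+2) / aa α ((n:ℤ)+2)) * wseq α ε ν μ (n+1) := rfl

set_option maxHeartbeats 1000000 in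
lemma wseq_rec (hα0 : 0 < α) (hα1 : α < 1) (hε : 0 < ε) {ν μ : ℝ}
    (hνpos : 0 < ν) (hμ : 0 < μ) (hεν : ε^2 * ν = 1) (m : ℕ) :
    aa α ((m:ℤ)+1) * wseq α ε ν μ (m+1) - (ε*μ + ε * cc α ((m:ℤ)+2)) * wseq α ε ν μ (m+2)
      - aa α ((m:ℤ)+3) * wseq α ε ν μ (m+3) = 0 := by
  have ha2 : aa α ((m:ℤ)+2) ≠ 0 := aa_ne hα0 hα1 _
  have ha3 : aa α ((m:ℤ)+3) ≠ 0 := aa_ne hα0 hα1 _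
  have e2 : aa α ((m:ℤ)+2) * wseq α ε ν μ (m+2) = ε * SS α ν μ ((m:ℤ)+2) * wseq α ε ν μ (m+1) := by
    rw [wseq_succ]
    field_simp
  have e1 : aa α ((m:ℤ)+3) * wseq α ε ν μ (m+3) = ε * SS α ν μ ((m:ℤ)+3) * wseq α ε ν μ (m+2) := by
    have h := wseq_succ (α := α) (ε := ε) ν μ (m+1)
    have hc : ((m+1:ℕ):ℤ)+2 = (m:ℤ)+3 := by push_cast; ring
    rw [hc] at h
    rw [show m+1+2 = m+3 from rfl, show m+1+1 = m+2 from rfl] at h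
    rw [h]
    field_simp
  have h3 := SS_rec hα0 hα1 hνpos hμ (n := (m:ℤ)+2) (by omega)
  have hdd : dd α μ ((m:ℤ)+2) = μ + cc α ((m:ℤ)+2) := rfl
  have hKKe : KK α ((m:ℤ)+2) = aa α ((m:ℤ)+1) * aa α ((m:ℤ)+2) := by
    unfold KK
    congr 2
    ring
  rw [hdd, hKKe, show (m:ℤ)+2+1 = (m:ℤ)+3 from by ring] at h3
  -- h3 : SS (m+2) * ((μ + cc (m+2)) + SS (m+3)) = ν * (aa (m+1) * aa (m+2))
  have hG2 : aa α ((m:ℤ)+2) * (aa α ((m:ℤ)+1) * wseq α ε ν μ (m+1)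
      - (ε*μ + ε * cc α ((m:ℤ)+2)) * wseq α ε ν μ (m+2)
      - aa α ((m:ℤ)+3) * wseq α ε ν μ (m+3)) = 0 := by
    linear_combination (-(aa α ((m:ℤ)+2))) * e1
      + (-(ε*(μ + cc α ((m:ℤ)+2))) - ε * SS α ν μ ((m:ℤ)+3)) * e2
      + (-(ε^2) * wseq α ε ν μ (m+1)) * h3
      + (-(aa α ((m:ℤ)+1) * aa α ((m:ℤ)+2) * wseq α ε ν μ (m+1))) * hεν
  exact (mul_eq_zero.mp hG2).resolve_left ha2

end Construct

section Construct2
variable {α ε : ℝ}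

/-- the symmetric extension -/
noncomputable def xe (α ε ν μ : ℝ) (k : ℤ) : ℝ :=
  if 0 ≤ k then wseq α ε ν μ k.toNat else (-1:ℝ)^k * wseq α ε ν μ (-k).toNat

lemma xe_nonneg (ν μ : ℝ) {k : ℤ} (hk : 0 ≤ k) : xe α ε ν μ k = wseq α ε ν μ k.toNat :=
  if_pos hk

lemma xe_symm (ν μ : ℝ) (k : ℤ) : xe α ε ν μ (-k) = (-1:ℝ)^k * xe α ε ν μ k := by
  rcases lt_trichotomy k 0 with h | h | h
  · rw [xe_nonneg ν μ (by omega : (0:ℤ) ≤ -k)]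
    unfold xe
    rw [if_neg (by omega)]
    rw [← mul_assoc, negone_zpow_sq, one_mul]
  · subst h; norm_num [xe]
  · unfold xe
    rw [if_neg (by omega), if_pos h.le, neg_neg, negone_zpow_neg]

/-- forward equations imply full recurrence for symmetric sequences -/
lemma sym_rec {l : ℝ} {x : ℤ → ℝ} (hsym : ∀ n : ℤ, x (-n) = (-1:ℝ)^n * x n)
    (hfwd : ∀ n : ℤ, 1 ≤ n →
      aa α (n-1) * x (n-1) - (l + ε * cc α n) * x n - aa α (n+1) * x (n+1) = 0)
    (h0 : aa α (-1) * x (-1) - (l + ε * cc α 0) * x 0 - aa α 1 * x 1 = 0) :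
    Rec α ε l x := by
  intro k
  rcases lt_trichotomy k 0 with h | h | h
  · set m : ℤ := -k with hm
    have hm1 : 1 ≤ m := by omega
    have h := hfwd m hm1
    have p1 : (-1:ℝ)^(m-1) = -(-1:ℝ)^m := by
      rw [zpow_sub_one₀ (by norm_num : (-1:ℝ) ≠ 0)]
      norm_num
    have p2 : (-1:ℝ)^(m+1) = -(-1:ℝ)^m := by
      rw [zpow_add_one₀ (by norm_num : (-1:ℝ) ≠ 0)]
      norm_num
    have s1 : x (k-1) = (-1:ℝ)^(m+1) * x (m+1) := by
      rw [show k-1 = -(m+1) by omega]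
      exact hsym (m+1)
    have s2 : x k = (-1:ℝ)^m * x m := by
      rw [show k = -m by omega]
      exact hsym m
    have s3 : x (k+1) = (-1:ℝ)^(m-1) * x (m-1) := by
      rw [show k+1 = -(m-1) by omega]
      exact hsym (m-1)
    have a1 : aa α (k-1) = aa α (m+1) := by
      rw [show k-1 = -(m+1) by omega]
      exact aa_even (m+1)
    have a2 : aa α (k+1) = aa α (m-1) := by
      rw [show k+1 = -(m-1) by omega]
      exact aa_even (m-1)
    have c1 : cc α k = cc α m := by
      rw [show k = -m by omega]
      exact cc_even m
    rw [s1, s2, s3, a1, a2, c1, p1, p2]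
    linear_combination ((-1:ℝ)^m) * h
  · subst h
    have e1 : (0:ℤ)-1 = -1 := by ring
    rw [e1]
    exact h0
  · exact hfwd k (by omega)

set_option maxHeartbeats 1000000 in
lemma eig_construct (hα0 : 0 < α) (hα1 : α < 1) (hε : 0 < ε) {ν μ : ℝ}
    (hν : ν = (1/ε)^2) (hμ : 0 < μ)
    (hroot : (μ + cc α 0) * ((μ + cc α 1) + SS α ν μ 2) = ν * (-2 * (aa α 0 * aa α 1))) :
    IsLineEig α ε (0,-1) (((ε*μ : ℝ)) : ℂ) := by
  have hνpos : 0 < ν := by rw [hν]; positivity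
  have hεν : ε^2 * ν = 1 := by rw [hν]; field_simp
  have hb0 : 0 < ε*μ + ε * cc α 0 := by
    have := cc_pos hα0 (α := α) 0
    have := mul_pos hε hμ
    nlinarith
  -- the real sequence
  set x : ℤ → ℝ := xe α ε ν μ with hx
  have hsym : ∀ n : ℤ, x (-n) = (-1:ℝ)^n * x n := xe_symm ν μ
  have hx0 : x 0 = -2 * aa α 1 / (ε*μ + ε * cc α 0) := by
    rw [hx, xe_nonneg ν μ le_rfl]
    rfl
  have hx1 : x 1 = 1 := by
    rw [hx, xe_nonneg ν μ (by norm_num)]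
    rfl
  have hxw : ∀ m : ℕ, x (m:ℤ) = wseq α ε ν μ m := by
    intro m
    rw [hx, xe_nonneg ν μ (by positivity)]
    simp
  -- forward equations
  have hfwd : ∀ n : ℤ, 1 ≤ n →
      aa α (n-1) * x (n-1) - (ε*μ + ε * cc α n) * x n - aa α (n+1) * x (n+1) = 0 := by
    intro n hn
    rcases eq_or_lt_of_le hn with h1 | h1
    · -- n = 1
      subst h1
      rw [show (1:ℤ)-1 = 0 by ring, show (1:ℤ)+1 = 2 by ring]
      have hx2v : x 2 = ε * SS α ν μ 2 / aa α 2 := by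
        have h := hxw 2
        have hw2 : wseq α ε ν μ 2 = ε * SS α ν μ ((0:ℤ)+2) / aa α ((0:ℤ)+2) * wseq α ε ν μ 1 :=
          wseq_succ ν μ 0
        rw [show ((2:ℕ):ℤ) = (2:ℤ) by norm_num] at h
        rw [h, hw2, show ((0:ℤ)+2) = (2:ℤ) by ring, show wseq α ε ν μ 1 = 1 from rfl, mul_one]
      have ha2 : aa α 2 ≠ 0 := aa_ne hα0 hα1 2
      have k1 : (ε*μ + ε*cc α 0) * x 0 = -2*aa α 1 := by
        rw [hx0, mul_div_assoc', mul_div_cancel_left₀ _ (ne_of_gt hb0)]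
      have k2 : aa α 2 * x 2 = ε * SS α ν μ 2 := by
        rw [hx2v]
        field_simp
      have hG : (ε*μ + ε*cc α 0) * (aa α 0 * x 0 - (ε*μ + ε*cc α 1) * x 1 - aa α 2 * x 2)
          = 0 := by
        rw [hx1]
        linear_combination (aa α 0) * k1 + (-(ε*μ + ε*cc α 0)) * k2 + (-(ε^2)) * hroot
          + (2*(aa α 0 * aa α 1)) * hεν
      exact (mul_eq_zero.mp hG).resolve_left (ne_of_gt hb0)
    · -- n ≥ 2
      set m : ℕ := (n-2).toNat with hm
      have hnm : n = (m:ℤ) + 2 := by omega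
      have q1 : x (n-1) = wseq α ε ν μ (m+1) := by
        rw [show n-1 = ((m+1:ℕ):ℤ) by omega]
        exact hxw (m+1)
      have q2 : x n = wseq α ε ν μ (m+2) := by
        rw [show n = ((m+2:ℕ):ℤ) by omega]
        exact hxw (m+2)
      have q3 : x (n+1) = wseq α ε ν μ (m+3) := by
        rw [show n+1 = ((m+3:ℕ):ℤ) by omega]
        exact hxw (m+3)
      have hrec := wseq_rec hα0 hα1 hε hνpos hμ hεν m
      rw [q1, q2, q3, show n-1 = (m:ℤ)+1 by omega, show n+1 = (m:ℤ)+3 by omega,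
        show n = (m:ℤ)+2 from hnm]
      exact hrec
  -- equation at 0
  have k1 : (ε*μ + ε*cc α 0) * x 0 = -2*aa α 1 := by
    rw [hx0, mul_div_assoc', mul_div_cancel_left₀ _ (ne_of_gt hb0)]
  have h0eq : aa α (-1) * x (-1) - (ε*μ + ε * cc α 0) * x 0 - aa α 1 * x 1 = 0 := by
    have hm1 : x (-1) = - x 1 := by
      have h := hsym 1
      rw [h, zpow_one]
      ring
    have haev : aa α (-1 : ℤ) = aa α 1 := by
      rw [show (-1 : ℤ) = -(1:ℤ) from rfl, aa_even]
    rw [hm1, haev, hx1]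
    linarith [k1]
  have hRec : Rec α ε (ε*μ) x := sym_rec hsym hfwd h0eq
  -- summability
  have hsum : Summable (fun m : ℕ => (wseq α ε ν μ m)^2) := by
    apply summable_of_ratio_norm_eventually_le (r := 1/2) (by norm_num)
    rw [Filter.eventually_atTop]
    set N₀ : ℕ := ⌈ε*ν*α⌉₊ with hN₀
    refine ⟨N₀ + 1, ?_⟩
    intro m hm
    obtain ⟨j, rfl⟩ : ∃ j, m = j + 1 := ⟨m-1, by omega⟩
    have hjN : N₀ ≤ j := by omega
    set c : ℝ := ε * SS α ν μ ((j:ℤ)+2) / aa α ((j:ℤ)+2) with hc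
    have hwc : wseq α ε ν μ (j+2) = c * wseq α ε ν μ (j+1) := wseq_succ ν μ j
    have haj : 0 < aa α ((j:ℤ)+2) := aa_pos hα0 (by omega)
    have haj1 : 0 < aa α ((j:ℤ)+1) := aa_pos hα0 (by omega)
    have hSpos := SS_nonneg hα0 hνpos hμ (n := (j:ℤ)+2) (by omega)
    have hcpos : 0 ≤ c := by
      rw [hc]; positivity
    have hdj := dd_pos hα0 hμ (α := α) (μ := μ) ((j:ℤ)+2)
    have hSle := SS_le hα0 hνpos hμ (n := (j:ℤ)+2) (by omega)
    have hKe : KK α ((j:ℤ)+2) = aa α ((j:ℤ)+1) * aa α ((j:ℤ)+2) := by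
      unfold KK; congr 2; ring
    rw [hKe] at hSle
    have hddsq : ((j:ℝ)+2)^2 ≤ dd α μ ((j:ℤ)+2) := by
      have h := dd_ge_sq hα0 hμ (α := α) (μ := μ) ((j:ℤ)+2)
      push_cast at h
      exact h
    have hjb : ε*ν*α ≤ (j:ℝ) := by
      have := Nat.le_ceil (ε*ν*α)
      have h2 : ((N₀:ℕ):ℝ) ≤ (j:ℝ) := by exact_mod_cast hjN
      rw [hN₀] at h2
      linarith
    have haup : aa α ((j:ℤ)+1) < α/2 := aa_lt hα0 _
    -- c ≤ 1/2
    have hchalf : c ≤ 1/2 := by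
      rw [hc, div_le_iff₀ haj]
      -- ε * SS ≤ 1/2 * aa
      have h1 : SS α ν μ ((j:ℤ)+2) ≤ ν * (aa α ((j:ℤ)+1) * aa α ((j:ℤ)+2)) / dd α μ ((j:ℤ)+2) :=
        hSle
      have h2 : 0 < ((j:ℝ)+2)^2 := by positivity
      have h3 : ν * (aa α ((j:ℤ)+1) * aa α ((j:ℤ)+2)) / dd α μ ((j:ℤ)+2)
          ≤ ν * (aa α ((j:ℤ)+1) * aa α ((j:ℤ)+2)) / ((j:ℝ)+2)^2 := by
        apply div_le_div_of_nonneg_left _ h2 hddsq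
        positivity
      have h4 : ε * (ν * (aa α ((j:ℤ)+1) * aa α ((j:ℤ)+2)) / ((j:ℝ)+2)^2)
          ≤ 1/2 * aa α ((j:ℤ)+2) := by
        rw [mul_div_assoc', div_le_iff₀ h2]
        have h5 : ε*ν*α ≤ ((j:ℝ)+2)^2 := by nlinarith
        nlinarith [mul_le_mul_of_nonneg_right
            (mul_le_mul_of_nonneg_left haup.le (le_of_lt (mul_pos hε hνpos))) haj.le,
          mul_le_mul_of_nonneg_right h5 haj.le]
      calc ε * SS α ν μ ((j:ℤ)+2)
          ≤ ε * (ν * (aa α ((j:ℤ)+1) * aa α ((j:ℤ)+2)) / dd α μ ((j:ℤ)+2)) := by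
            exact mul_le_mul_of_nonneg_left h1 hε.le
        _ ≤ ε * (ν * (aa α ((j:ℤ)+1) * aa α ((j:ℤ)+2)) / ((j:ℝ)+2)^2) := by
            exact mul_le_mul_of_nonneg_left h3 hε.le
        _ ≤ 1/2 * aa α ((j:ℤ)+2) := h4
    rw [show j+1+1 = j+2 from rfl, hwc]
    rw [Real.norm_eq_abs, Real.norm_eq_abs, abs_of_nonneg (sq_nonneg _),
      abs_of_nonneg (sq_nonneg _)]
    have hcsq : c^2 ≤ 1/2 := by nlinarith
    nlinarith [sq_nonneg (wseq α ε ν μ (j+1)), sq_nonneg c,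
      mul_le_mul_of_nonneg_right hcsq (sq_nonneg (wseq α ε ν μ (j+1)))]
  -- the complex eigenvector
  refine ⟨fun n => ((x n : ℝ) : ℂ), ?_, ?_, ?_⟩
  · -- Memℓp
    apply memℓp_gen
    have he2 : ((2:ENNReal)).toReal = ((2:ℕ):ℝ) := by norm_num
    rw [he2]
    have hfe : (fun k : ℤ => ‖((x k : ℝ):ℂ)‖ ^ (((2:ℕ):ℝ)))
        = fun k : ℤ => (x k)^2 := by
      funext k
      rw [Real.rpow_natCast]
      rw [Complex.norm_real, Real.norm_eq_abs]
      exact sq_abs _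
    rw [hfe]
    apply Summable.of_nat_of_neg
    · have : (fun m : ℕ => (x (m:ℤ))^2) = fun m : ℕ => (wseq α ε ν μ m)^2 := by
        funext m
        rw [hxw m]
      rw [this]
      exact hsum
    · have : (fun m : ℕ => (x (-(m:ℤ)))^2) = fun m : ℕ => (wseq α ε ν μ m)^2 := by
        funext m
        rw [hsym m]
        rw [mul_pow, ← hxw m]
        have h2 : ((-1:ℝ)^(m:ℤ))^2 = 1 := by
          rw [sq]
          exact negone_zpow_sq (m:ℤ)
        rw [h2, one_mul]
      rw [this]
      exact hsum
  · -- nonzero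
    intro hzero
    have h1 := congrFun hzero 1
    rw [hx1] at h1
    simp at h1
  · -- LineEqn
    exact rec_to_lineEqn hRec

end Construct2
section Final
variable {α : ℝ}

set_option maxHeartbeats 1000000 in
lemma mono_step (h05 : 0.5 < α) (h08 : α < 0.8469) {ε₁ ε₂ l₁ l₂ : ℝ}
    (hε₁ : 0 < ε₁) (hε₂ : 0 < ε₂) (h12 : ε₁ < ε₂)
    (hl₁ : 0 < l₁) (hl₂ : 0 < l₂)
    (hE₂ : IsLineEig α ε₂ (0,-1) ((l₂:ℝ):ℂ))
    (huniq : ∀ m : ℝ, 0 < m → IsLineEig α ε₁ (0,-1) ((m:ℝ):ℂ) → m = l₁)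
    (hmono : ε₁⁻¹ * l₁ ≤ ε₂⁻¹ * l₂) : False := by
  have hα0 : 0 < α := by linarith
  have hα1 : α < 1 := by linarith
  set μ₁ : ℝ := ε₁⁻¹ * l₁ with hμ₁def
  set μ₂ : ℝ := ε₂⁻¹ * l₂ with hμ₂def
  set ν₁ : ℝ := (1/ε₁)^2 with hν₁def
  set ν₂ : ℝ := (1/ε₂)^2 with hν₂def
  have hμ₁pos : 0 < μ₁ := by rw [hμ₁def]; positivity
  have hμ₂pos : 0 < μ₂ := by rw [hμ₂def]; positivity
  have hν₁pos : 0 < ν₁ := by rw [hν₁def]; positivity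
  have hν₂pos : 0 < ν₂ := by rw [hν₂def]; positivity
  have hν21 : ν₂ < ν₁ := by
    rw [hν₁def, hν₂def]
    have h1 : 1/ε₂ < 1/ε₁ := by
      rw [div_lt_div_iff₀ hε₂ hε₁]
      linarith
    have h2 : 0 < 1/ε₂ := by positivity
    nlinarith
  set M2 : ℝ := -2*(aa α 0 * aa α 1) with hM2def
  have hM2pos : 0 < M2 := by
    rw [hM2def, show -2*(aa α 0 * aa α 1) = -2*(aa α 0 * aa α 1) from rfl]
    have := Mpos h05 h08
    have heq := Mval_eq (α := α) hα0
    rw [show (-2 : ℝ)*(aa α 0 * aa α 1) = -2*(aa α 0 * aa α 1) from rfl]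
    linarith [heq ▸ this]
  -- eigen data at ε₂
  obtain ⟨t, htpos, htrel, htop⟩ := key hα0 hα1 hl₂ hε₂ hE₂
  set s : ℤ → ℝ := fun n => ε₂⁻¹ * t n with hsdef
  have hs : ∀ n : ℤ, 2 ≤ n → 0 < s n ∧ s n * (dd α μ₂ n + s (n+1)) = ν₂ * KK α n := by
    intro n hn
    constructor
    · rw [hsdef]
      exact mul_pos (by positivity) (htpos n hn)
    · have h := htrel n hn
      rw [hsdef]
      simp only []
      show ε₂⁻¹ * t n * ((μ₂ + cc α n) + ε₂⁻¹ * t (n+1)) = ν₂ * KK α n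
      rw [hμ₂def, hν₂def]
      unfold KK
      field_simp
      linear_combination h
  have htop₂ : (μ₂ + cc α 0) * ((μ₂ + cc α 1) + s 2) = ν₂ * M2 := by
    rw [hsdef, hM2def]
    simp only []
    rw [hμ₂def, hν₂def]
    field_simp
    linear_combination htop
  -- Phi at (ν₁, μ₂) is negative
  have hcomp : SS α ν₁ μ₂ 2 * ν₂ ≤ s 2 * ν₁ :=
    SS_nu_compare hα0 hμ₂pos hν₂pos hν21.le hs
  have hSSnn : 0 ≤ SS α ν₁ μ₂ 2 := SS_nonneg hα0 hν₁pos hμ₂pos le_rfl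
  have hdd0 : 0 < μ₂ + cc α 0 := by linarith [cc_pos hα0 (α := α) 0]
  have hdd1 : 0 < μ₂ + cc α 1 := by linarith [cc_pos hα0 (α := α) 1]
  have hPhi2 : (μ₂ + cc α 0) * ((μ₂ + cc α 1) + SS α ν₁ μ₂ 2) < ν₁ * M2 := by
    rw [← mul_lt_mul_iff_right₀ hν₂pos]
    have e1 : (μ₂ + cc α 0) * (SS α ν₁ μ₂ 2 * ν₂) ≤ (μ₂ + cc α 0) * (s 2 * ν₁) :=
      mul_le_mul_of_nonneg_left hcomp hdd0.le
    have e4 : ν₁*((μ₂ + cc α 0)*(μ₂ + cc α 1)) + ν₁*((μ₂ + cc α 0)* s 2) = ν₁*(ν₂*M2) := by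
      linear_combination ν₁ * htop₂
    nlinarith [mul_pos (mul_pos hdd0 hdd1) (sub_pos.mpr hν21)]
  -- Phi at (ν₁, B) is nonnegative
  set B : ℝ := μ₂ + Real.sqrt (ν₁ * M2) + 1 with hBdef
  have hsqrtnn : 0 ≤ Real.sqrt (ν₁ * M2) := Real.sqrt_nonneg _
  have hμ₂B : μ₂ ≤ B := by rw [hBdef]; linarith
  have hBpos : 0 < B := by linarith
  have hsq : Real.sqrt (ν₁ * M2)^2 = ν₁ * M2 := Real.sq_sqrt (by positivity)
  have hSSB : 0 ≤ SS α ν₁ B 2 := SS_nonneg hα0 hν₁pos hBpos le_rfl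
  have hddB0 : 0 < B + cc α 0 := by linarith [cc_pos hα0 (α := α) 0]
  have hPhiB : ν₁ * M2 ≤ (B + cc α 0) * ((B + cc α 1) + SS α ν₁ B 2) := by
    have hc0 := cc_pos hα0 (α := α) 0
    have hc1 := cc_pos hα0 (α := α) 1
    have hB2 : ν₁ * M2 < B^2 := by nlinarith
    nlinarith [mul_le_mul_of_nonneg_left hSSB hddB0.le]
  -- IVT
  set g : ℝ → ℝ := fun m => (m + cc α 0)*((m + cc α 1) + SS α ν₁ m 2) - ν₁*M2 with hgdef
  have hcont : ContinuousOn g (Set.Icc μ₂ B) := by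
    intro m hm
    have hmpos : 0 < m := lt_of_lt_of_le hμ₂pos hm.1
    apply ContinuousAt.continuousWithinAt
    apply ContinuousAt.sub _ continuousAt_const
    apply ContinuousAt.mul (continuousAt_id.add continuousAt_const)
    exact (continuousAt_id.add continuousAt_const).add
      (SS_contAt hα0 hα1 hν₁pos hmpos le_rfl)
  have hmem : (0:ℝ) ∈ Set.Icc (g μ₂) (g B) := by
    constructor
    · rw [hgdef]; simp only []; linarith
    · rw [hgdef]; simp only []; linarith
  obtain ⟨μ₃, hμ₃mem, hμ₃root⟩ := intermediate_value_Icc hμ₂B hcont hmem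
  have hμ₃pos : 0 < μ₃ := lt_of_lt_of_le hμ₂pos hμ₃mem.1
  have hgμ₂neg : g μ₂ < 0 := by rw [hgdef]; simp only []; linarith
  have hμ₃gt : μ₂ < μ₃ := by
    rcases eq_or_lt_of_le hμ₃mem.1 with h | h
    · exfalso
      rw [← h] at hμ₃root
      linarith [hμ₃root, hgμ₂neg]
    · exact h
  have hroot' : (μ₃ + cc α 0) * ((μ₃ + cc α 1) + SS α ν₁ μ₃ 2)
      = ν₁ * (-2*(aa α 0 * aa α 1)) := by
    have := hμ₃root
    rw [hgdef] at this
    simp only [] at this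
    rw [← hM2def]
    linarith
  have hEig₃ : IsLineEig α ε₁ (0,-1) ((ε₁*μ₃ : ℝ):ℂ) :=
    eig_construct hα0 hα1 hε₁ hν₁def hμ₃pos hroot'
  have huq := huniq (ε₁*μ₃) (mul_pos hε₁ hμ₃pos) hEig₃
  -- ε₁ * μ₃ = l₁ ⇒ μ₃ = μ₁
  have hμ₃eq : μ₃ = μ₁ := by
    rw [hμ₁def, ← huq]
    field_simp
  have : μ₁ ≤ μ₂ := hmono
  linarith [hμ₃gt, hμ₃eq ▸ hμ₃gt]

end Final
end NSproof

open Asymptotics in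
/-- Bounds on the unique positive eigenvalue `λ(ε)` on the line `k̂ = (0,−1)`
for `α ∈ (0.5, 0.8469)` and `0 < ε < ε_*(α)`, strict monotone decrease of
`ε⁻¹λ(ε)`, and `λ(ε) = O(1)` as `ε → 0⁺`. -/
theorem unstable_eigenvalue_bounds
    (α εs : ℝ) (hα : 0.5 < α ∧ α < 0.8469) (hεs : 0 < εs)
    (lam : ℝ → ℝ)
    (hlam : ∀ ε : ℝ, 0 < ε → ε < εs →
      0 < lam ε ∧ IsLineEig α ε (0, -1) ((lam ε : ℝ) : ℂ)
        ∧ ∀ μ : ℝ, 0 < μ → IsLineEig α ε (0, -1) (μ : ℂ) → μ = lam ε) :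
    0 < α ^ 2 * (1 - α ^ 2) / (2 * (α ^ 2 + 1))
        - α ^ 4 * (α ^ 2 + 3) / (4 * (α ^ 2 + 1) * (α ^ 2 + 4))
    ∧ (∀ ε : ℝ, 0 < ε → ε < εs →
        Real.sqrt (α ^ 2 * (1 - α ^ 2) / (2 * (α ^ 2 + 1))
            - α ^ 4 * (α ^ 2 + 3) / (4 * (α ^ 2 + 1) * (α ^ 2 + 4)))
          - ε * (α ^ 2 + 1) < lam ε
        ∧ lam ε < Real.sqrt (α ^ 2 * (1 - α ^ 2) / (2 * (α ^ 2 + 1))) - ε * α ^ 2)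
    ∧ StrictAntiOn (fun ε => ε⁻¹ * lam ε) (Set.Ioo 0 εs)
    ∧ lam =O[nhdsWithin 0 (Set.Ioi 0)] (fun _ => (1 : ℝ)) := by
  obtain ⟨h05, h08⟩ := hα
  have hpart2 : ∀ ε : ℝ, 0 < ε → ε < εs →
      Real.sqrt (α ^ 2 * (1 - α ^ 2) / (2 * (α ^ 2 + 1))
          - α ^ 4 * (α ^ 2 + 3) / (4 * (α ^ 2 + 1) * (α ^ 2 + 4)))
        - ε * (α ^ 2 + 1) < lam ε
      ∧ lam ε < Real.sqrt (α ^ 2 * (1 - α ^ 2) / (2 * (α ^ 2 + 1))) - ε * α ^ 2 := by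
    intro ε h1 h2
    obtain ⟨hpos, hEig, _⟩ := hlam ε h1 h2
    exact NSproof.bounds_of_eig h05 h08 h1 hpos hEig
  refine ⟨NSproof.MK_pos h05 h08, hpart2, ?_, ?_⟩
  · intro ε₁ h₁ ε₂ h₂ h12
    obtain ⟨hpos₁, hEig₁, huniq₁⟩ := hlam ε₁ h₁.1 h₁.2
    obtain ⟨hpos₂, hEig₂, huniq₂⟩ := hlam ε₂ h₂.1 h₂.2
    by_contra hc
    exact NSproof.mono_step h05 h08 h₁.1 h₂.1 h12 hpos₁ hpos₂ hEig₂ huniq₁ (not_lt.mp hc)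
  · rw [Asymptotics.isBigO_iff]
    refine ⟨Real.sqrt (α ^ 2 * (1 - α ^ 2) / (2 * (α ^ 2 + 1))), ?_⟩
    filter_upwards [Ioo_mem_nhdsGT_of_mem (Set.mem_Ico.mpr ⟨le_refl (0:ℝ), hεs⟩)] with ε hε
    obtain ⟨hlow, hup⟩ := hpart2 ε hε.1 hε.2
    obtain ⟨hpos, -, -⟩ := hlam ε hε.1 hε.2
    have h1 : 0 ≤ ε * α^2 := mul_nonneg hε.1.le (sq_nonneg α)
    rw [Real.norm_eq_abs, Real.norm_eq_abs, abs_one, mul_one, abs_of_pos hpos]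
    linarith
end

section
/- Fix α ∈ (0.5, 0.8469) and k̂ = (0,−1). Let λ(ε) denote the unique positive eigenvalue of the viscous line-k̂ spectral problem for 0 < ε < ε_*(α), and let λ₀ denote the unique positive eigenvalue of the inviscid (ε = 0) line-k̂ operator. Then lim_{ε→0⁺} λ(ε) = λ₀; i.e., the unstable eigenvalue of the linearized Navier–Stokes operator persists in the zero viscosity limit and converges to the unstable eigenvalue of the linearized Euler operator. -/
/-!
For `k̂ = (0, -1)` the coefficients are `A_n = a_n := (α/2)(1 - 1/(n² + α²))` (`shearCoef`), even in
`n`, positive for `n ≠ 0` and negative for `n = 0` when `α < 1`. In the variables `w_n = a_n ω_n`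
the line problem is the recurrence `w_{n-1} - g_n w_n - w_{n+1} = 0` with
`g_n = (λ + ε(n² + α²))/a_n` (`diagRatio`), and `g_n ≥ 2λ/α > 0` for `n ≠ 0`. On `n ≥ 0` it has
the geometrically decaying solution `w_{k+1} = y_k w_k` (`cfSol`), where `y_k` (`cfTail`) are the
tails of the continued fraction `1/(g_{k+1} + 1/(g_{k+2} + ⋯))`. The extension
`w_{-k} = (-1)^k w_k` (`signedExt`) also solves the recurrence at `n = 0` exactly when
`F(λ, ε) := g_0 + 2 y_0` (`matchingFun`) vanishes, and then `λ` is an eigenvalue. The continued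
fraction converges uniformly, so `F` is continuous, and `F(·, 0)` changes sign on some `[a, b]`.
By uniqueness of the positive eigenvalues, `λ₀` is the only zero of `F(·, 0)` and `λ(ε)` the only
zero of `F(·, ε)` in `[a, b]`; as `F(λ₀ ∓ δ, ε)` keeps the sign of `F(λ₀ ∓ δ, 0)` for small `ε`,
the intermediate value theorem puts `λ(ε)` within `δ` of `λ₀`.
-/

open Filter Set Topology

lemma inv_one_add_sq_lt_one {c : ℝ} (hc : c ≠ 0) : (1 + c ^ 2)⁻¹ < 1 :=
  inv_lt_one_of_one_lt₀ (lt_add_of_pos_right 1 (sq_pos_iff.2 hc))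

lemma abs_one_div_add_one_div_add_sub_le {a b x y : ℝ} (ha : 0 < a) (hb : 0 < b)
    (hx : 0 ≤ x) (hy : 0 ≤ y) :
    |1 / (a + 1 / (b + x)) - 1 / (a + 1 / (b + y))| ≤ |x - y| / (1 + a * b) ^ 2 := by
  have hX : 1 + a * b ≤ a * (b + x) + 1 := by nlinarith
  have hY : 1 + a * b ≤ a * (b + y) + 1 := by nlinarith
  have hab : 0 < 1 + a * b := by positivity
  have hdiff : 1 / (a + 1 / (b + x)) - 1 / (a + 1 / (b + y))
      = (x - y) / ((a * (b + x) + 1) * (a * (b + y) + 1)) := by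
    field_simp
    ring
  have hsq : (1 + a * b) ^ 2 ≤ (a * (b + x) + 1) * (a * (b + y) + 1) := by
    rw [sq]; exact mul_le_mul hX hY hab.le (by linarith)
  rw [hdiff, abs_div, abs_of_pos (a := (a * (b + x) + 1) * (a * (b + y) + 1)) (by nlinarith)]
  exact div_le_div_of_nonneg_left (abs_nonneg _) (by positivity) hsq

noncomputable def cfTrunc (h : ℕ → ℝ) : ℕ → ℕ → ℝ
  | 0, _ => 1
  | k + 1, n => 1 / (h n + cfTrunc h k (n + 1))

noncomputable def cfTail (h : ℕ → ℝ) (n : ℕ) : ℝ :=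
  limUnder atTop fun k => cfTrunc h k n

section ContinuedFraction

variable {h : ℕ → ℝ} {c : ℝ}

lemma cfTrunc_nonneg (hh : ∀ n, 0 ≤ h n) (k n : ℕ) : 0 ≤ cfTrunc h k n := by
  induction k generalizing n with
  | zero => simp [cfTrunc]
  | succ k ih =>
    have := hh n
    have := ih (n + 1)
    simp only [cfTrunc]
    positivity

lemma cfTrunc_succ_le (hh : ∀ n, 0 < h n) (k n : ℕ) : cfTrunc h (k + 1) n ≤ 1 / h n :=
  one_div_le_one_div_of_le (hh n)
    (le_add_of_nonneg_right (cfTrunc_nonneg (fun n => (hh n).le) k (n + 1)))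

variable (hc : 0 < c) (hh : ∀ n, c ≤ h n)
include hc hh

/-- Two steps of `t ↦ 1 / (h n + t)` contract by `(1 + c²)⁻²`; the constant in front covers
`k = 0, 1`. -/
lemma abs_cfTrunc_succ_sub_le (k n : ℕ) :
    |cfTrunc h (k + 1) n - cfTrunc h k n| ≤ (1 + c⁻¹) * (1 + c ^ 2) * (1 + c ^ 2)⁻¹ ^ k := by
  have hpos n : 0 < h n := hc.trans_le (hh n)
  induction k using Nat.twoStepInduction generalizing n with
  | zero =>
    have h1 : cfTrunc h 1 n = 1 / (h n + 1) := rfl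
    have : 0 < 1 / (h n + 1) := by have := hpos n; positivity
    have : 1 / (h n + 1) ≤ 1 := by rw [div_le_one (by linarith [hpos n])]; linarith [hpos n]
    rw [h1, show cfTrunc h 0 n = 1 from rfl, pow_zero, mul_one, abs_le]
    constructor <;> nlinarith [sq_nonneg c, inv_pos.2 hc]
  | one =>
    have h1 := cfTrunc_succ_le hpos 0 n
    have h2 := cfTrunc_succ_le hpos 1 n
    have h3 := cfTrunc_nonneg (fun n => (hpos n).le) 1 n
    have h4 := cfTrunc_nonneg (fun n => (hpos n).le) 2 n
    have h5 : 1 / h n ≤ c⁻¹ := by rw [one_div]; exact inv_anti₀ hc (hh n)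
    have h6 : (1 + c⁻¹) * (1 + c ^ 2) * (1 + c ^ 2)⁻¹ ^ 1 = 1 + c⁻¹ := by
      field_simp
    rw [h6, abs_le]
    constructor <;> linarith
  | more k ih _ =>
    have hx := cfTrunc_nonneg (fun n => (hpos n).le) (k + 1) (n + 2)
    have hy := cfTrunc_nonneg (fun n => (hpos n).le) k (n + 2)
    have hab : c ^ 2 ≤ h n * h (n + 1) := by
      rw [sq]; exact mul_le_mul (hh n) (hh (n + 1)) hc.le (hpos n).le
    calc |cfTrunc h (k + 2 + 1) n - cfTrunc h (k + 2) n|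
        ≤ |cfTrunc h (k + 1) (n + 2) - cfTrunc h k (n + 2)| / (1 + h n * h (n + 1)) ^ 2 :=
          abs_one_div_add_one_div_add_sub_le (hpos n) (hpos (n + 1)) hx hy
      _ ≤ (1 + c⁻¹) * (1 + c ^ 2) * (1 + c ^ 2)⁻¹ ^ k / (1 + c ^ 2) ^ 2 := by
          gcongr
          exact ih (n + 2)
      _ = (1 + c⁻¹) * (1 + c ^ 2) * (1 + c ^ 2)⁻¹ ^ (k + 2) := by
          rw [pow_add, div_eq_mul_inv, ← inv_pow]; ring

lemma tendsto_cfTrunc (n : ℕ) :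
    Tendsto (fun k => cfTrunc h k n) atTop (𝓝 (cfTail h n)) :=
  (cauchySeq_of_le_geometric _ _ (inv_one_add_sq_lt_one hc.ne') fun k => by
    rw [dist_comm, Real.dist_eq]; exact abs_cfTrunc_succ_sub_le hc hh k n).tendsto_limUnder

lemma dist_cfTrunc_cfTail_le (k n : ℕ) :
    dist (cfTrunc h k n) (cfTail h n)
      ≤ (1 + c⁻¹) * (1 + c ^ 2) * (1 + c ^ 2)⁻¹ ^ k / (1 - (1 + c ^ 2)⁻¹) :=
  dist_le_of_le_geometric_of_tendsto _ _ (inv_one_add_sq_lt_one hc.ne')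
    (fun k => by rw [dist_comm, Real.dist_eq]; exact abs_cfTrunc_succ_sub_le hc hh k n)
    (tendsto_cfTrunc hc hh n) k

lemma cfTail_nonneg (n : ℕ) : 0 ≤ cfTail h n :=
  ge_of_tendsto' (tendsto_cfTrunc hc hh n)
    fun k => cfTrunc_nonneg (fun n => hc.le.trans (hh n)) k n

lemma cfTail_eq (n : ℕ) : cfTail h n = 1 / (h n + cfTail h (n + 1)) := by
  have hden : h n + cfTail h (n + 1) ≠ 0 := by
    linarith [hh n, cfTail_nonneg hc hh (n + 1)]
  refine tendsto_nhds_unique ((tendsto_cfTrunc hc hh n).comp (tendsto_add_atTop_nat 1)) ?_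
  exact tendsto_const_nhds.div (tendsto_const_nhds.add (tendsto_cfTrunc hc hh (n + 1))) hden

lemma cfTail_pos (n : ℕ) : 0 < cfTail h n := by
  rw [cfTail_eq hc hh]
  have := cfTail_nonneg hc hh (n + 1)
  have := hc.trans_le (hh n)
  positivity

lemma cfTail_le_one_div (n : ℕ) : cfTail h n ≤ 1 / h n := by
  rw [cfTail_eq hc hh]
  exact one_div_le_one_div_of_le (hc.trans_le (hh n))
    (le_add_of_nonneg_right (cfTail_nonneg hc hh (n + 1)))

lemma cfTail_mul_cfTail_succ_le (n : ℕ) : cfTail h n * cfTail h (n + 1) ≤ (1 + c ^ 2)⁻¹ := by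
  have hz := cfTail_nonneg hc hh (n + 1)
  have hzc : cfTail h (n + 1) * c ≤ 1 := by
    have := cfTail_le_one_div hc hh (n + 1)
    rw [le_div_iff₀ (hc.trans_le (hh _))] at this
    nlinarith [hh (n + 1)]
  rw [cfTail_eq hc hh n, div_mul_eq_mul_div, one_mul, div_le_iff₀ (by linarith [hh n]),
    inv_mul_eq_div, le_div_iff₀ (by positivity)]
  nlinarith [hh n]

/-- The interval `[1 / (C + U), U]`, `U = 1 + C / c`, is invariant under `t ↦ 1 / (g + t)` for
`c ≤ g ≤ C`. -/
lemma cfTrunc_mem_Icc {C : ℝ} (hC : ∀ n, h n ≤ C) (k n : ℕ) :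
    cfTrunc h k n ∈ Icc (1 / (C + (1 + C / c))) (1 + C / c) := by
  have hC0 : 0 ≤ C := hc.le.trans ((hh 0).trans (hC 0))
  have hCc : 0 ≤ C / c := by positivity
  have hU : 1 ≤ 1 + C / c := by linarith
  induction k generalizing n with
  | zero =>
    refine ⟨?_, hU⟩
    rw [show cfTrunc h 0 n = 1 from rfl, div_le_one (by linarith)]
    linarith
  | succ k ih =>
    obtain ⟨hl, hu⟩ := ih (n + 1)
    have hl0 : 0 < 1 / (C + (1 + C / c)) := by positivity
    have hg := hh n
    have hgC := hC n
    simp only [cfTrunc]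
    constructor
    · exact one_div_le_one_div_of_le (by linarith) (by linarith)
    · set U := 1 + C / c
      set L := 1 / (C + U)
      have hUc : U * c = c + C := by simp only [U]; field_simp
      have hL : L * (C + U) = 1 := by simp only [L]; field_simp
      have hL1 : L ≤ 1 := by simp only [L]; rw [div_le_one (by linarith)]; linarith
      rw [div_le_iff₀ (by linarith)]
      nlinarith [mul_le_mul_of_nonneg_left hg (by linarith : (0 : ℝ) ≤ U),
        mul_le_mul_of_nonneg_left hl (by linarith : (0 : ℝ) ≤ U),
        mul_le_mul_of_nonneg_left hL1 hC0]

lemma one_div_le_cfTail {C : ℝ} (hC : ∀ n, h n ≤ C) (n : ℕ) :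
    1 / (C + (1 + C / c)) ≤ cfTail h n :=
  ge_of_tendsto' (tendsto_cfTrunc hc hh n) fun k => (cfTrunc_mem_Icc hc hh hC k n).1

end ContinuedFraction

section Continuity

variable {X : Type*} [TopologicalSpace X] {H : X → ℕ → ℝ} {s : Set X} {c : ℝ}

lemma continuousOn_cfTrunc (hH : ∀ x ∈ s, ∀ n, 0 < H x n)
    (hcont : ∀ n, ContinuousOn (fun x => H x n) s) (k n : ℕ) :
    ContinuousOn (fun x => cfTrunc (H x) k n) s := by
  induction k generalizing n with
  | zero => exact continuousOn_const
  | succ k ih =>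
    refine continuousOn_const.div ((hcont n).add (ih (n + 1))) fun x hx => ?_
    have := cfTrunc_nonneg (fun n => (hH x hx n).le) k (n + 1)
    linarith [hH x hx n]

lemma continuousOn_cfTail (hc : 0 < c) (hH : ∀ x ∈ s, ∀ n, c ≤ H x n)
    (hcont : ∀ n, ContinuousOn (fun x => H x n) s) (n : ℕ) :
    ContinuousOn (fun x => cfTail (H x) n) s := by
  have hρ := inv_one_add_sq_lt_one hc.ne'
  have hbound : Tendsto (fun k => (1 + c⁻¹) * (1 + c ^ 2) * (1 + c ^ 2)⁻¹ ^ k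
      / (1 - (1 + c ^ 2)⁻¹)) atTop (𝓝 0) := by
    simpa using ((tendsto_pow_atTop_nhds_zero_of_lt_one (by positivity) hρ).const_mul
      ((1 + c⁻¹) * (1 + c ^ 2))).div_const (1 - (1 + c ^ 2)⁻¹)
  have hunif : TendstoUniformlyOn (fun k x => cfTrunc (H x) k n) (fun x => cfTail (H x) n)
      atTop s := by
    rw [Metric.tendstoUniformlyOn_iff]
    intro δ hδ
    filter_upwards [hbound.eventually (gt_mem_nhds hδ)] with k hk x hx
    rw [dist_comm]
    exact (dist_cfTrunc_cfTail_le hc (hH x hx) k n).trans_lt hk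
  exact hunif.continuousOn (Frequently.of_forall fun k =>
    continuousOn_cfTrunc (fun x hx n => hc.trans_le (hH x hx n)) hcont k n)

end Continuity

noncomputable def cfSol (h : ℕ → ℝ) (k : ℕ) : ℝ := ∏ i ∈ Finset.range k, cfTail h i

section Solution

variable {h : ℕ → ℝ} {c : ℝ} (hc : 0 < c) (hh : ∀ n, c ≤ h n)
include hc hh

lemma cfSol_recurrence (k : ℕ) : cfSol h k - h k * cfSol h (k + 1) - cfSol h (k + 2) = 0 := by
  have hrec := cfTail_eq hc hh k
  have hden : h k + cfTail h (k + 1) ≠ 0 := by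
    linarith [hh k, cfTail_nonneg hc hh (k + 1)]
  simp only [cfSol, Finset.prod_range_succ]
  rw [hrec]
  field_simp
  ring

lemma cfSol_pos (k : ℕ) : 0 < cfSol h k :=
  Finset.prod_pos fun i _ => cfTail_pos hc hh i

lemma cfSol_add_two_le (k : ℕ) : cfSol h (k + 2) ≤ (1 + c ^ 2)⁻¹ * cfSol h k := by
  have hk : cfSol h (k + 2) = cfTail h k * cfTail h (k + 1) * cfSol h k := by
    simp only [cfSol, Finset.prod_range_succ]; ring
  rw [hk]
  exact mul_le_mul_of_nonneg_right (cfTail_mul_cfTail_succ_le hc hh k) (cfSol_pos hc hh k).le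

end Solution

lemma le_mul_sqrt_pow_of_add_two_le {f : ℕ → ℝ} {q : ℝ} (hq : 0 < q)
    (hf : ∀ k, f (k + 2) ≤ q * f k) (k : ℕ) :
    f k ≤ max (f 0) (f 1 / √q) * √q ^ k := by
  have hsq : 0 < √q := Real.sqrt_pos.2 hq
  induction k using Nat.twoStepInduction with
  | zero => simp
  | one =>
    calc f 1 = f 1 / √q * √q ^ 1 := by field_simp
      _ ≤ _ := by gcongr; exact le_max_right _ _
  | more k ih _ =>
    calc f (k + 2) ≤ q * f k := hf k
      _ ≤ q * (max (f 0) (f 1 / √q) * √q ^ k) := by gcongr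
      _ = max (f 0) (f 1 / √q) * √q ^ (k + 2) := by
        rw [pow_add, Real.sq_sqrt hq.le]; ring

lemma memℓp_of_norm_le_geometric {E : Type*} [NormedAddCommGroup E] {f : ℤ → E}
    {p : ENNReal} {C r : ℝ} (hp : 0 < p.toReal) (hr0 : 0 ≤ r) (hr1 : r < 1)
    (hf : ∀ n, ‖f n‖ ≤ C * r ^ n.natAbs) : Memℓp f p := by
  have hC : 0 ≤ C := by simpa using (norm_nonneg _).trans (hf 0)
  have hgeo : Summable fun k : ℕ => C ^ p.toReal * (r ^ p.toReal) ^ k :=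
    (summable_geometric_of_lt_one (by positivity)
      (Real.rpow_lt_one hr0 hr1 hp)).mul_left _
  have hgeoℤ : Summable fun n : ℤ => C ^ p.toReal * (r ^ p.toReal) ^ n.natAbs :=
    .of_nat_of_neg (by simpa using hgeo) (by simpa using hgeo)
  refine memℓp_gen (hgeoℤ.of_nonneg_of_le (fun n => by positivity) fun n => ?_)
  calc ‖f n‖ ^ p.toReal ≤ (C * r ^ n.natAbs) ^ p.toReal := by gcongr; exact hf n
    _ = C ^ p.toReal * (r ^ p.toReal) ^ n.natAbs := by
      rw [Real.mul_rpow hC (by positivity), ← Real.rpow_natCast, ← Real.rpow_natCast,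
        ← Real.rpow_mul hr0, ← Real.rpow_mul hr0, mul_comm p.toReal]

noncomputable def signedExt (w : ℕ → ℝ) (n : ℤ) : ℝ :=
  if 0 ≤ n then w n.toNat else (-1) ^ n.natAbs * w n.natAbs

lemma signedExt_natCast (w : ℕ → ℝ) (k : ℕ) : signedExt w k = w k := by
  simp [signedExt]

lemma signedExt_neg_natCast (w : ℕ → ℝ) (k : ℕ) : signedExt w (-k) = (-1) ^ k * w k := by
  rcases k with _ | k
  · simp [signedExt]
  · rw [signedExt, if_neg (by omega), Int.natAbs_neg, Int.natAbs_natCast]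

lemma abs_signedExt (w : ℕ → ℝ) (n : ℤ) : |signedExt w n| = |w n.natAbs| := by
  rcases Int.eq_nat_or_neg n with ⟨k, rfl | rfl⟩
  · simp [signedExt_natCast]
  · simp [signedExt_neg_natCast, abs_mul]

lemma signedExt_recurrence {g : ℤ → ℝ} {w : ℕ → ℝ} (hg : ∀ n, g (-n) = g n)
    (hw : ∀ k : ℕ, w k - g (k + 1) * w (k + 1) - w (k + 2) = 0)
    (h0 : g 0 * w 0 + 2 * w 1 = 0) (n : ℤ) :
    signedExt w (n - 1) - g n * signedExt w n - signedExt w (n + 1) = 0 := by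
  rcases le_or_gt 1 n with hn | hn
  · obtain ⟨k, rfl⟩ : ∃ k : ℕ, n = k + 1 := ⟨(n - 1).toNat, by omega⟩
    have e0 : signedExt w (k + 1 - 1) = w k := by
      rw [add_sub_cancel_right, signedExt_natCast]
    have e1 : signedExt w (k + 1) = w (k + 1) := by exact_mod_cast signedExt_natCast w (k + 1)
    have e2 : signedExt w (k + 1 + 1) = w (k + 2) := by
      exact_mod_cast signedExt_natCast w (k + 2)
    rw [e0, e1, e2]
    exact_mod_cast hw k
  · obtain ⟨k, rfl⟩ : ∃ k : ℕ, n = -k := ⟨n.natAbs, by omega⟩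
    rcases k with _ | k
    · have em : signedExt w (-((0 : ℕ) : ℤ) - 1) = -w 1 := by
        simpa using signedExt_neg_natCast w 1
      have e0 : signedExt w (-((0 : ℕ) : ℤ)) = w 0 := by simpa using signedExt_natCast w 0
      have e1 : signedExt w (-((0 : ℕ) : ℤ) + 1) = w 1 := by simpa using signedExt_natCast w 1
      rw [em, e0, e1]
      simp only [Nat.cast_zero, neg_zero]
      linarith
    · have e1 : -((k + 1 : ℕ) : ℤ) - 1 = -((k + 2 : ℕ) : ℤ) := by push_cast; ring
      have e2 : -((k + 1 : ℕ) : ℤ) + 1 = -(k : ℤ) := by push_cast; ring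
      rw [e1, e2, signedExt_neg_natCast, signedExt_neg_natCast, signedExt_neg_natCast, hg]
      have := hw k
      push_cast at this ⊢
      linear_combination (-(-1 : ℝ) ^ k) * this

section UniqueZero

variable {f : ℝ → ℝ} {a b x₀ x : ℝ} (hf : ContinuousOn f (Icc a b))
  (hzero : ∀ y ∈ Icc a b, f y = 0 → y = x₀) (hx : x ∈ Icc a b)
include hf hzero hx

lemma pos_of_lt_unique_zero (ha : 0 < f a) (hxx₀ : x < x₀) : 0 < f x := by
  by_contra! hfx
  obtain ⟨y, hy, hy0⟩ :=
    intermediate_value_Icc' hx.1 (hf.mono (Icc_subset_Icc_right hx.2)) ⟨hfx, ha.le⟩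
  linarith [hzero y ⟨hy.1, hy.2.trans hx.2⟩ hy0, hy.2]

lemma neg_of_unique_zero_lt (hb : f b < 0) (hxx₀ : x₀ < x) : f x < 0 := by
  by_contra! hfx
  obtain ⟨y, hy, hy0⟩ :=
    intermediate_value_Icc' hx.2 (hf.mono (Icc_subset_Icc_left hx.1)) ⟨hb.le, hfx⟩
  linarith [hzero y ⟨hx.1.trans hy.1, hy.2⟩ hy0, hy.1]

end UniqueZero

theorem tendsto_of_unique_zero {F : ℝ → ℝ → ℝ} {a b x₀ : ℝ} {z : ℝ → ℝ} (hab : a ≤ b)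
    (hF : ContinuousOn (Function.uncurry F) (Icc a b ×ˢ Ici 0))
    (ha : 0 < F a 0) (hb : F b 0 < 0)
    (h0 : ∀ x ∈ Icc a b, F x 0 = 0 → x = x₀)
    (hz : ∀ᶠ t in 𝓝[>] 0, ∀ x ∈ Icc a b, F x t = 0 → x = z t) :
    Tendsto z (𝓝[>] 0) (𝓝 x₀) := by
  have hFt {t : ℝ} (ht : 0 ≤ t) : ContinuousOn (F · t) (Icc a b) :=
    hF.comp (Continuous.continuousOn (f := fun x => (x, t)) (by fun_prop))
      fun x hx => ⟨hx, ht⟩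
  have hFx {x : ℝ} (hx : x ∈ Icc a b) : Tendsto (F x) (𝓝[>] 0) (𝓝 (F x 0)) := by
    have : ContinuousWithinAt (F x) (Ici 0) 0 :=
      (hF (x, 0) ⟨hx, self_mem_Ici⟩).comp
        (Continuous.continuousWithinAt (f := fun t => (x, t)) (by fun_prop))
        fun t ht => ⟨hx, ht⟩
    exact (this.mono Ioi_subset_Ici_self).tendsto
  have hx₀ : x₀ ∈ Ioo a b := by
    obtain ⟨y, hy, hy0⟩ := intermediate_value_Icc' hab (hFt le_rfl) ⟨hb.le, ha.le⟩
    obtain rfl := h0 y hy hy0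
    exact ⟨lt_of_le_of_ne hy.1 (by rintro rfl; linarith),
      lt_of_le_of_ne hy.2 (by rintro rfl; linarith)⟩
  have key {p q : ℝ} (hp : p ∈ Icc a b) (hq : q ∈ Icc a b) (hpx : p < x₀) (hqx : x₀ < q) :
      ∀ᶠ t in 𝓝[>] 0, z t ∈ Icc p q := by
    have hFp := pos_of_lt_unique_zero (hFt le_rfl) h0 hp ha hpx
    have hFq := neg_of_unique_zero_lt (hFt le_rfl) h0 hq hb hqx
    filter_upwards [hz, (hFx hp).eventually (lt_mem_nhds hFp),
      (hFx hq).eventually (gt_mem_nhds hFq), self_mem_nhdsWithin] with t hzt hpt hqt ht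
    obtain ⟨y, hy, hy0⟩ := intermediate_value_Icc' (hpx.trans hqx).le
      ((hFt (le_of_lt ht)).mono (Icc_subset_Icc hp.1 hq.2)) ⟨hqt.le, hpt.le⟩
    rwa [← hzt y ⟨hp.1.trans hy.1, hy.2.trans hq.2⟩ hy0]
  refine tendsto_order.2 ⟨fun l hl => ?_, fun u hu => ?_⟩
  · filter_upwards [key (p := max a ((l + x₀) / 2)) (q := b) ⟨le_max_left _ _,
      max_le hab (by linarith [hx₀.2])⟩ ⟨hab, le_rfl⟩
      (max_lt hx₀.1 (by linarith)) hx₀.2] with t ht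
    exact lt_of_lt_of_le (lt_max_of_lt_right (by linarith)) ht.1
  · filter_upwards [key (p := a) (q := min b ((u + x₀) / 2)) ⟨le_rfl, hab⟩
      ⟨le_min hab (by linarith [hx₀.1]), min_le_left _ _⟩ hx₀.1
      (lt_min hx₀.2 (by linarith))] with t ht
    exact lt_of_le_of_lt ht.2 (min_lt_of_right_lt (by linarith))

noncomputable def shearCoef (α : ℝ) (m : ℤ) : ℝ := α / 2 * (1 - 1 / ((m : ℝ) ^ 2 + α ^ 2))

noncomputable def diagRatio (α lam ε : ℝ) (n : ℤ) : ℝ :=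
  (lam + ε * ((n : ℝ) ^ 2 + α ^ 2)) / shearCoef α n

noncomputable def matchingFun (α lam ε : ℝ) : ℝ :=
  diagRatio α lam ε 0 + 2 * cfTail (fun k => diagRatio α lam ε (k + 1)) 0

lemma coefA_one_zero (α : ℝ) (m : ℤ) : coefA α (1, 0) (m, -1) = shearCoef α m := by
  simp only [coefA, shearCoef]
  push_cast
  ring

lemma shearCoef_neg (α : ℝ) (m : ℤ) : shearCoef α (-m) = shearCoef α m := by
  simp [shearCoef]

lemma diagRatio_neg (α lam ε : ℝ) (n : ℤ) : diagRatio α lam ε (-n) = diagRatio α lam ε n := by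
  simp [diagRatio, shearCoef_neg]

lemma one_le_intCast_sq {m : ℤ} (hm : m ≠ 0) : (1 : ℝ) ≤ (m : ℝ) ^ 2 :=
  (one_le_sq_iff_one_le_abs _).2 (by exact_mod_cast Int.one_le_abs hm)

section ShearCoef

variable {α : ℝ} (hα : 0 < α)
include hα

lemma shearCoef_pos {m : ℤ} (hm : m ≠ 0) : 0 < shearCoef α m := by
  have := one_le_intCast_sq hm
  have : 1 / ((m : ℝ) ^ 2 + α ^ 2) < 1 := by rw [div_lt_one (by positivity)]; nlinarith
  unfold shearCoef
  nlinarith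

lemma shearCoef_lt (m : ℤ) : shearCoef α m < α / 2 := by
  have : 0 < 1 / ((m : ℝ) ^ 2 + α ^ 2) := by positivity
  unfold shearCoef
  nlinarith

lemma shearCoef_one_le {m : ℤ} (hm : m ≠ 0) : shearCoef α 1 ≤ shearCoef α m := by
  have := one_le_intCast_sq hm
  have : 1 / ((m : ℝ) ^ 2 + α ^ 2) ≤ 1 / (((1 : ℤ) : ℝ) ^ 2 + α ^ 2) :=
    one_div_le_one_div_of_le (by positivity) (by push_cast; linarith)
  unfold shearCoef
  nlinarith

lemma shearCoef_zero_neg (hα1 : α < 1) : shearCoef α 0 < 0 := by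
  have : 1 < 1 / α ^ 2 := by rw [lt_div_iff₀ (by positivity)]; nlinarith
  have h2 : α ^ 2 < 1 := by nlinarith
  simp only [shearCoef, Int.cast_zero]
  rw [zero_pow two_ne_zero, zero_add]
  nlinarith

lemma shearCoef_ne_zero (hα1 : α ≠ 1) (m : ℤ) : shearCoef α m ≠ 0 := by
  rcases eq_or_ne m 0 with rfl | hm
  · have h2 : α ^ 2 ≠ 1 := fun h => hα1 (by nlinarith)
    simp only [shearCoef, Int.cast_zero]
    rw [zero_pow two_ne_zero, zero_add, mul_ne_zero_iff, sub_ne_zero, one_div]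
    exact ⟨(by positivity : α / 2 ≠ 0), fun h => h2 (inv_eq_one.mp h.symm)⟩
  · exact (shearCoef_pos hα hm).ne'

lemma two_mul_div_le_diagRatio {lam ε : ℝ} (hlam : 0 < lam) (hε : 0 ≤ ε) {n : ℤ}
    (hn : n ≠ 0) : 2 * lam / α ≤ diagRatio α lam ε n := by
  have ha := shearCoef_pos hα hn
  have := shearCoef_lt hα n
  rw [diagRatio, div_le_div_iff₀ hα ha]
  nlinarith [mul_nonneg hε (add_nonneg (sq_nonneg (n : ℝ)) (sq_nonneg α))]

lemma diagRatio_le {lam : ℝ} (hlam : 0 ≤ lam) {n : ℤ} (hn : n ≠ 0) :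
    diagRatio α lam 0 n ≤ lam / shearCoef α 1 := by
  rw [diagRatio, zero_mul, add_zero]
  exact div_le_div_of_nonneg_left hlam (shearCoef_pos hα one_ne_zero) (shearCoef_one_le hα hn)

end ShearCoef

lemma abs_inv_shearCoef_le {α : ℝ} (hα : 0 < α) (n : ℤ) :
    |(shearCoef α n)⁻¹| ≤ (shearCoef α 1)⁻¹ + |shearCoef α 0|⁻¹ := by
  have h1 := shearCoef_pos hα one_ne_zero
  rcases eq_or_ne n 0 with rfl | hn
  · rw [abs_inv]; linarith [inv_pos.2 h1]
  · rw [abs_of_pos (inv_pos.2 (shearCoef_pos hα hn))]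
    have := inv_anti₀ h1 (shearCoef_one_le hα hn)
    linarith [inv_nonneg.2 (abs_nonneg (shearCoef α 0))]

lemma exists_abs_signedExt_cfSol_le {h : ℕ → ℝ} {c : ℝ} (hc : 0 < c) (hh : ∀ n, c ≤ h n) :
    ∃ M r : ℝ, 0 ≤ r ∧ r < 1 ∧ ∀ n, |signedExt (cfSol h) n| ≤ M * r ^ n.natAbs := by
  have hq : 0 < (1 + c ^ 2)⁻¹ := by positivity
  refine ⟨max (cfSol h 0) (cfSol h 1 / √((1 + c ^ 2)⁻¹)), √((1 + c ^ 2)⁻¹),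
    Real.sqrt_nonneg _,
    (Real.sqrt_lt' one_pos).2 (by rw [one_pow]; exact inv_one_add_sq_lt_one hc.ne'), fun n => ?_⟩
  rw [abs_signedExt, abs_of_pos (cfSol_pos hc hh _)]
  exact le_mul_sqrt_pow_of_add_two_le hq (cfSol_add_two_le hc hh) _

lemma lineEqn_of_recurrence {α lam ε : ℝ} {W : ℤ → ℝ} (ha : ∀ n, shearCoef α n ≠ 0)
    (hW : ∀ n, W (n - 1) - diagRatio α lam ε n * W n - W (n + 1) = 0) :
    LineEqn α ε (0, -1) lam (fun n => ((W n / shearCoef α n : ℝ) : ℂ)) := by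
  intro n
  have key : shearCoef α (n - 1) * (W (n - 1) / shearCoef α (n - 1))
      - ε * ((0 + (n : ℝ)) ^ 2 + (α * ((-1 : ℤ) : ℝ)) ^ 2) * (W n / shearCoef α n)
      - shearCoef α (n + 1) * (W (n + 1) / shearCoef α (n + 1))
      = lam * (W n / shearCoef α n) := by
    have := hW n
    rw [diagRatio] at this
    field_simp [ha] at this ⊢
    push_cast
    linear_combination this
  simp only [zero_add, coefA_one_zero]
  exact_mod_cast key

theorem isLineEig_of_matchingFun_eq_zero {α lam ε : ℝ} (hα : 0 < α) (hα1 : α ≠ 1)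
    (hlam : 0 < lam) (hε : 0 ≤ ε) (hF : matchingFun α lam ε = 0) :
    IsLineEig α ε (0, -1) lam := by
  set h : ℕ → ℝ := fun k => diagRatio α lam ε (k + 1)
  have hc : 0 < 2 * lam / α := by positivity
  have hh k : 2 * lam / α ≤ h k := two_mul_div_le_diagRatio hα hlam hε (by omega)
  have ha := shearCoef_ne_zero hα hα1
  have hW := signedExt_recurrence (diagRatio_neg α lam ε) (cfSol_recurrence hc hh)
    (by simpa [cfSol, matchingFun] using hF)
  refine ⟨_, ?_, fun h0 => ?_, by exact_mod_cast lineEqn_of_recurrence ha hW⟩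
  · obtain ⟨M, r, hr0, hr1, hM⟩ := exists_abs_signedExt_cfSol_le hc hh
    refine memℓp_of_norm_le_geometric (C := ((shearCoef α 1)⁻¹ + |shearCoef α 0|⁻¹) * M)
      (by norm_num) hr0 hr1 fun n => ?_
    rw [Complex.norm_real, Real.norm_eq_abs, abs_div, div_eq_mul_inv, ← abs_inv, mul_comm,
      mul_assoc]
    exact mul_le_mul (abs_inv_shearCoef_le hα n) (hM n) (abs_nonneg _)
      ((abs_nonneg _).trans (abs_inv_shearCoef_le hα n))
  · have := congrFun h0 0
    simp [signedExt, cfSol, ha 0] at this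

lemma continuous_diagRatio (α : ℝ) (n : ℤ) :
    Continuous fun p : ℝ × ℝ => diagRatio α p.1 p.2 n := by
  unfold diagRatio
  fun_prop

lemma continuousOn_matchingFun {α a : ℝ} (hα : 0 < α) (ha : 0 < a) :
    ContinuousOn (Function.uncurry (matchingFun α)) (Ici a ×ˢ Ici 0) := by
  have hH : ∀ p ∈ Ici a ×ˢ Ici (0 : ℝ), ∀ k : ℕ,
      2 * a / α ≤ diagRatio α p.1 p.2 (k + 1) := fun p hp k =>
    (div_le_div_of_nonneg_right (by linarith [hp.1.out]) hα.le).trans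
      (two_mul_div_le_diagRatio hα (ha.trans_le hp.1) hp.2 (by omega))
  exact (continuous_diagRatio α 0).continuousOn.add (continuousOn_const.mul
    (continuousOn_cfTail (by positivity) hH
      (fun k => (continuous_diagRatio α _).continuousOn) 0))

section Signs

variable {α lam : ℝ} (hα : 0 < α) (hα1 : α < 1)
include hα hα1

lemma matchingFun_neg (h1 : 1 ≤ lam) (h0 : -shearCoef α 0 ≤ lam) :
    matchingFun α lam 0 < 0 := by
  have hlam : 0 < lam := by linarith
  have ha0 := shearCoef_zero_neg hα hα1
  have ha1 := shearCoef_pos hα one_ne_zero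
  have ha1' := shearCoef_lt hα 1
  have hy : cfTail (fun k => diagRatio α lam 0 (k + 1)) 0 ≤ shearCoef α 1 / lam := by
    have e : diagRatio α lam 0 ((0 : ℕ) + 1) = lam / shearCoef α 1 := by simp [diagRatio]
    have := cfTail_le_one_div (h := fun k => diagRatio α lam 0 (k + 1)) (by positivity)
      (fun k => two_mul_div_le_diagRatio hα hlam le_rfl (by omega)) 0
    rwa [e, one_div_div] at this
  have hg0 : diagRatio α lam 0 0 ≤ -1 := by
    rw [diagRatio, zero_mul, add_zero, div_le_iff_of_neg ha0]
    linarith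
  have : shearCoef α 1 / lam ≤ shearCoef α 1 := div_le_self ha1.le h1
  unfold matchingFun
  linarith

lemma matchingFun_pos (hlam : 0 < lam) (h1 : lam ≤ shearCoef α 1)
    (h0 : lam * (2 + α / (2 * shearCoef α 1)) ≤ -shearCoef α 0) :
    0 < matchingFun α lam 0 := by
  have ha0 := shearCoef_zero_neg hα hα1
  have ha1 := shearCoef_pos hα one_ne_zero
  set K := 2 + α / (2 * shearCoef α 1)
  have hK : 2 ≤ K := le_add_of_nonneg_right (by positivity)
  have hy : 1 / K ≤ cfTail (fun k => diagRatio α lam 0 (k + 1)) 0 := by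
    refine le_trans ?_ (one_div_le_cfTail (by positivity)
      (fun k => two_mul_div_le_diagRatio hα hlam le_rfl (by omega))
      (fun k => diagRatio_le hα hlam.le (by omega)) 0)
    have hC : lam / shearCoef α 1 ≤ 1 := (div_le_one ha1).2 h1
    have hCc : lam / shearCoef α 1 / (2 * lam / α) = α / (2 * shearCoef α 1) := by
      field_simp
    exact one_div_le_one_div_of_le (by positivity) (by rw [hCc]; linarith)
  have hg0 : -(1 / K) ≤ diagRatio α lam 0 0 := by
    have : lam ≤ -shearCoef α 0 / K := by rw [le_div_iff₀ (by linarith)]; linarith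
    rw [diagRatio, zero_mul, add_zero, le_div_iff_of_neg ha0]
    linarith [show -(1 / K) * shearCoef α 0 = -shearCoef α 0 / K by ring]
  have : 0 < 1 / K := by positivity
  unfold matchingFun
  linarith

end Signs

lemma exists_matchingFun_sign_change {α : ℝ} (hα : 0 < α) (hα1 : α < 1) :
    ∃ a b, 0 < a ∧ a ≤ b ∧ 0 < matchingFun α a 0 ∧ matchingFun α b 0 < 0 := by
  have ha0 := shearCoef_zero_neg hα hα1
  have ha1 := shearCoef_pos hα one_ne_zero
  have ha1' := shearCoef_lt hα 1
  set K := 2 + α / (2 * shearCoef α 1)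
  have hK : 0 < K := by positivity
  have hpos : 0 < min (shearCoef α 1) (-shearCoef α 0 / K) :=
    lt_min ha1 (div_pos (neg_pos.2 ha0) hK)
  refine ⟨_, max 1 (-shearCoef α 0), hpos,
    (min_le_left _ _).trans (by linarith [le_max_left 1 (-shearCoef α 0)]),
    matchingFun_pos hα hα1 hpos (min_le_left _ _) ?_,
    matchingFun_neg hα hα1 (le_max_left _ _) (le_max_right _ _)⟩
  calc min (shearCoef α 1) (-shearCoef α 0 / K) * K ≤ -shearCoef α 0 / K * K := by
        gcongr; exact min_le_right _ _
    _ = -shearCoef α 0 := div_mul_cancel₀ _ hK.ne'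

/-- Persistence of the unstable eigenvalue in the zero viscosity limit on the line
`k̂ = (0,−1)` for `α ∈ (0.5, 0.8469)`: `λ(ε) → λ₀` as `ε → 0⁺`. -/
theorem unstable_eigenvalue_zero_viscosity_limit
    (α εs l0 : ℝ) (hα : 0.5 < α ∧ α < 0.8469) (hεs : 0 < εs)
    (lam : ℝ → ℝ)
    (hlam : ∀ ε : ℝ, 0 < ε → ε < εs →
      0 < lam ε ∧ IsLineEig α ε (0, -1) ((lam ε : ℝ) : ℂ)
        ∧ ∀ μ : ℝ, 0 < μ → IsLineEig α ε (0, -1) (μ : ℂ) → μ = lam ε)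
    (hl0 : 0 < l0 ∧ IsLineEig α 0 (0, -1) (l0 : ℂ)
        ∧ ∀ μ : ℝ, 0 < μ → IsLineEig α 0 (0, -1) (μ : ℂ) → μ = l0) :
    Filter.Tendsto lam (nhdsWithin 0 (Set.Ioi 0)) (nhds l0) := by
  obtain ⟨hα0, hα1⟩ : 0 < α ∧ α < 1 := by norm_num at hα; constructor <;> linarith
  obtain ⟨a, b, ha, hab, hFa, hFb⟩ := exists_matchingFun_sign_change hα0 hα1
  have heig {x ε : ℝ} (hx : x ∈ Icc a b) (hε : 0 ≤ ε) (hF : matchingFun α x ε = 0) :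
      IsLineEig α ε (0, -1) x :=
    isLineEig_of_matchingFun_eq_zero hα0 hα1.ne (ha.trans_le hx.1) hε hF
  refine tendsto_of_unique_zero hab ((continuousOn_matchingFun hα0 ha).mono
    (prod_mono Icc_subset_Ici_self subset_rfl)) hFa hFb
    (fun x hx hF => hl0.2.2 x (ha.trans_le hx.1) (heig hx le_rfl hF)) ?_
  filter_upwards [Ioo_mem_nhdsGT hεs] with ε hε x hx hF
  exact (hlam ε hε.1 hε.2).2.2 x (ha.trans_le hx.1) (heig hx hε.1.le hF)
end

section
/- Fix t₀ ∈ ℝ and define u : ℝ × ℝ → ℝ by u(t,x) = 4 arctan( (√7/3) · sech( (√7/4)(t − t₀) ) · sin x ). Then u satisfies the unperturbed sine-Gordon equation ∂ₜₜu = (9/16) ∂ₓₓu + sin u at every point (t,x); moreover u(t, x+2π) = u(t,x) and u(t,−x) = −u(t,x) for all (t,x), and u(t,x) → 0 as t → ±∞ for each fixed x. (Together with its negative, this gives the figure-eight of orbits homoclinic to the fixed point u = 0.) -/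
/-!
Separate variables: `u = 4 arctan (A t * sin x)`. Since
`sin (4 arctan y) = 4 y (1 - y²) / (1 + y²)²`, after clearing the common denominator
`(1 + y²)²` the equation `u_tt = c u_xx + sin u` reduces to the amplitude equation
`A'' = (1 - c) A - 2 c A³` together with its first integral `A'² = (1 - c) A² - c A⁴`.
Both hold for `A t = a sech (k (t - t₀))` as soon as `k² = 1 - c` and `a² c = k²`; for
`c = 9/16` this is `k = √7/4`, `a = √7/3`. Periodicity and oddness in `x` come from `sin x`,
and the decay at `t → ±∞` from that of `sech`.
-/

open scoped Real

/-- The homoclinic/figure-eight solution of the unperturbed sine-Gordon equation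
`u_tt = (9/16)u_xx + sin u`:
`u(t,x) = 4 arctan((√7/3) sech((√7/4)(t−t₀)) sin x)`. -/
noncomputable def sgFigureEight (t₀ : ℝ) : ℝ → ℝ → ℝ :=
  fun t x =>
    4 * Real.arctan ((Real.sqrt 7 / 3)
      * (1 / Real.cosh (Real.sqrt 7 / 4 * (t - t₀))) * Real.sin x)

open Real Filter Topology

lemma sin_four_arctan (y : ℝ) :
    sin (4 * arctan y) = 4 * y * (1 - y ^ 2) / (1 + y ^ 2) ^ 2 := by
  have hs : √(1 + y ^ 2) ^ 2 = 1 + y ^ 2 := sq_sqrt (by positivity)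
  have hs0 : √(1 + y ^ 2) ≠ 0 := by positivity
  rw [show 4 * arctan y = 2 * (2 * arctan y) by ring, sin_two_mul, sin_two_mul, cos_two_mul,
    sin_arctan, cos_arctan]
  field_simp
  rw [show √(1 + y ^ 2) ^ 4 = (√(1 + y ^ 2) ^ 2) ^ 2 by ring, hs]
  ring

lemma deriv_deriv_four_arctan_comp {y y' : ℝ → ℝ} {y'' t : ℝ}
    (hy : ∀ s, HasDerivAt y (y' s) s) (hy' : HasDerivAt y' y'' t) :
    deriv (fun s => deriv (fun s' => 4 * arctan (y s')) s) t
      = 4 * (y'' * (1 + y t ^ 2) - 2 * y t * y' t ^ 2) / (1 + y t ^ 2) ^ 2 := by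
  have hfirst : (fun s => deriv (fun s' => 4 * arctan (y s')) s)
      = fun s => 4 * (y' s / (1 + y s ^ 2)) := by
    funext s
    rw [(((hy s).arctan).const_mul 4).deriv]
    ring
  have hden : HasDerivAt (fun s => 1 + y s ^ 2) (2 * y t * y' t) t := by
    simpa using ((hy t).pow 2).const_add 1
  rw [hfirst]
  exact ((hy'.div hden (by positivity)).const_mul 4).deriv.trans (by ring)

theorem sineGordon_four_arctan_mul_sin {c : ℝ} {A A' : ℝ → ℝ} {A'' t : ℝ}
    (hA : ∀ s, HasDerivAt A (A' s) s) (hA' : HasDerivAt A' A'' t)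
    (hode : A'' = (1 - c) * A t - 2 * c * A t ^ 3)
    (henergy : A' t ^ 2 = (1 - c) * A t ^ 2 - c * A t ^ 4) (x : ℝ) :
    deriv (fun s => deriv (fun s' => 4 * arctan (A s' * sin x)) s) t
      = c * deriv (fun z => deriv (fun z' => 4 * arctan (A t * sin z')) z) x
        + sin (4 * arctan (A t * sin x)) := by
  have htt := deriv_deriv_four_arctan_comp (y := fun s => A s * sin x)
    (fun s => (hA s).mul_const (sin x)) (hA'.mul_const (sin x))
  have hxx := deriv_deriv_four_arctan_comp (y := fun z => A t * sin z)
    (fun z => (hasDerivAt_sin z).const_mul (A t)) ((hasDerivAt_cos x).const_mul (A t))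
  rw [htt, hxx, sin_four_arctan]
  have hD : (1 + (A t * sin x) ^ 2) ^ 2 ≠ 0 := by positivity
  rw [mul_div_assoc', ← add_div, div_left_inj' hD]
  linear_combination (4 * sin x * (1 + (A t * sin x) ^ 2)) * hode
    - 8 * A t * sin x ^ 3 * henergy + 8 * c * A t ^ 3 * sin x * sin_sq_add_cos_sq x

noncomputable def sechProfile (a k t₀ t : ℝ) : ℝ := a * (1 / cosh (k * (t - t₀)))

lemma hasDerivAt_sechProfile (a k t₀ t : ℝ) :
    HasDerivAt (sechProfile a k t₀)
      (-(a * k) * (sinh (k * (t - t₀)) / cosh (k * (t - t₀)) ^ 2)) t := by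
  have hz : HasDerivAt (fun s => k * (s - t₀)) k t := by
    simpa using ((hasDerivAt_id t).sub_const t₀).const_mul k
  have h := ((hz.cosh.inv (cosh_pos _).ne').const_mul a)
  simp only [← one_div] at h
  exact h.congr_deriv (by ring)

lemma hasDerivAt_sechProfile_deriv (a k t₀ t : ℝ) :
    HasDerivAt (fun s => -(a * k) * (sinh (k * (s - t₀)) / cosh (k * (s - t₀)) ^ 2))
      (a * k ^ 2 * (1 / cosh (k * (t - t₀)) - 2 / cosh (k * (t - t₀)) ^ 3)) t := by
  have hz : HasDerivAt (fun s => k * (s - t₀)) k t := by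
    simpa using ((hasDerivAt_id t).sub_const t₀).const_mul k
  have hc := (cosh_pos (k * (t - t₀))).ne'
  refine ((hz.sinh.div (hz.cosh.pow 2) (pow_ne_zero 2 hc)).const_mul (-(a * k))).congr_deriv ?_
  simp only [Pi.pow_apply]
  field_simp
  linear_combination (-2 * a * k ^ 2 * cosh (k * (t - t₀))) * cosh_sq (k * (t - t₀))

theorem sineGordon_sechProfile {c a k : ℝ} (hk : k ^ 2 = 1 - c) (ha : a ^ 2 * c = k ^ 2)
    (t₀ t x : ℝ) :
    deriv (fun s => deriv (fun s' => 4 * arctan (sechProfile a k t₀ s' * sin x)) s) t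
      = c * deriv (fun z => deriv (fun z' => 4 * arctan (sechProfile a k t₀ t * sin z')) z) x
        + sin (4 * arctan (sechProfile a k t₀ t * sin x)) := by
  have hc := (cosh_pos (k * (t - t₀))).ne'
  refine sineGordon_four_arctan_mul_sin (hasDerivAt_sechProfile a k t₀)
    (hasDerivAt_sechProfile_deriv a k t₀ t) ?_ ?_ x
  · simp only [sechProfile]
    field_simp
    linear_combination 2 * a * ha + a * cosh (k * (t - t₀)) ^ 2 * hk
  · simp only [sechProfile]
    field_simp
    linear_combination a ^ 2 * cosh (k * (t - t₀)) ^ 2 * hk + a ^ 2 * ha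
      - a ^ 2 * k ^ 2 * cosh_sq (k * (t - t₀))

lemma tendsto_cosh_cocompact : Tendsto cosh (cocompact ℝ) atTop := by
  refine tendsto_atTop_mono (fun x => ?_) (tendsto_norm_cocompact_atTop.atTop_div_const two_pos)
  rw [norm_eq_abs, cosh_eq]
  cases abs_cases x <;> linarith [add_one_le_exp x, add_one_le_exp (-x), exp_pos x, exp_pos (-x)]

lemma tendsto_sechProfile_cocompact (a : ℝ) {k : ℝ} (hk : k ≠ 0) (t₀ : ℝ) :
    Tendsto (sechProfile a k t₀) (cocompact ℝ) (𝓝 0) := by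
  have hz : Tendsto (fun t => k * (t - t₀)) (cocompact ℝ) (cocompact ℝ) :=
    ((Homeomorph.subRight t₀).trans (Homeomorph.mulLeft₀ k hk)).map_cocompact.le
  have h := ((tendsto_cosh_cocompact.comp hz).inv_tendsto_atTop).const_mul a
  rw [mul_zero] at h
  exact h.congr fun t => by simp only [sechProfile, one_div]; rfl

/-- `u(t,x) = 4 arctan((√7/3) sech((√7/4)(t−t₀)) sin x)` solves the sine-Gordon
equation `∂ₜₜu = (9/16)∂ₓₓu + sin u`, is `2π`-periodic and odd in `x`, and tends
to `0` as `t → ±∞` for each fixed `x`. -/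
theorem sine_gordon_homoclinic_orbit (t₀ : ℝ) :
    (∀ t x : ℝ,
      deriv (fun s => deriv (fun s' => sgFigureEight t₀ s' x) s) t
        = (9 / 16) * deriv (fun a => deriv (fun a' => sgFigureEight t₀ t a') a) x
          + Real.sin (sgFigureEight t₀ t x))
    ∧ (∀ t x : ℝ, sgFigureEight t₀ t (x + 2 * π) = sgFigureEight t₀ t x)
    ∧ (∀ t x : ℝ, sgFigureEight t₀ t (-x) = -sgFigureEight t₀ t x)
    ∧ (∀ x : ℝ,
        Filter.Tendsto (fun t => sgFigureEight t₀ t x) Filter.atTop (nhds 0)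
        ∧ Filter.Tendsto (fun t => sgFigureEight t₀ t x) Filter.atBot (nhds 0)) := by
  have hu : sgFigureEight t₀
      = fun t x => 4 * arctan (sechProfile (√7 / 3) (√7 / 4) t₀ t * sin x) := rfl
  have h7 : √7 ^ 2 = 7 := sq_sqrt (by norm_num)
  have hlim (x : ℝ) : Tendsto (fun t => sgFigureEight t₀ t x) (cocompact ℝ) (𝓝 0) := by
    have hA := tendsto_sechProfile_cocompact (√7 / 3) (by positivity : √7 / 4 ≠ 0) t₀
    have hy : Tendsto (fun t => sechProfile (√7 / 3) (√7 / 4) t₀ t * sin x)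
        (cocompact ℝ) (𝓝 0) := by
      simpa only [zero_mul] using hA.mul_const (sin x)
    simpa only [hu, Function.comp_def, arctan_zero, mul_zero] using
      ((continuous_arctan.tendsto 0).comp hy).const_mul 4
  refine ⟨fun t x => ?_, fun t x => ?_, fun t x => ?_, fun x => ⟨?_, ?_⟩⟩
  · rw [hu]
    exact sineGordon_sechProfile (by linear_combination h7 / 16) (by ring) t₀ t x
  · simp only [hu, sin_add_two_pi]
  · simp only [hu, sin_neg, mul_neg, arctan_neg]
  · exact (hlim x).mono_left atTop_le_cocompact
  · exact (hlim x).mono_left atBot_le_cocompact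
end
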